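/- arXiv:2312.04932 — 5 statements merged into one kernel-verified Lean document; each statement's English description precedes it below -/
import Mathlib

section
/- Let μ be a Borel probability measure on ℝ with right-continuous distribution function M, let {x_j} be the (at most countable) set of atoms of μ with masses m_j = μ({x_j}), and write μ = Σ_j m_j δ_{x_j} + ρ where ρ is the diffuse (atomless) part. If ρ is nonzero, then the pushforward of ρ under M equals the restriction of Lebesgue measure on (0,1) to the complement of J, where J is the union over j of the open intervals (M(x_j−), M(x_j)). -/
open MeasureTheory Set
open scoped ENNReal

/-!
Test both measures on `Iic c`. Write `F = cdf μ` and `S = {F ≤ c}`. The jump intervals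
`(F(x-), F(x))` are pairwise disjoint and each has length `μ {x}`; those of the atoms in `S` lie
below `c` and have total length `μ (S ∩ atoms)`, while the others meet `Iic c` at most in
`(F(a-), c]` for the threshold point `a = sup S`. As `S` is either `Iic a` with `F a = c` or
`Iio a` with `F(a-) ≤ c < F a`, `μ S` plus that overshoot is `min 1 c`, the Lebesgue measure of
`(0,1) ∩ Iic c`.
-/

open Filter Function ProbabilityTheory

lemma Monotone.pairwise_disjoint_Ioo_leftLim {f : ℝ → ℝ} (hf : Monotone f) :
    Pairwise (Disjoint on fun x => Ioo (leftLim f x) (f x)) :=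
  (pairwise_disjoint_on _).2 fun _ _ hxy =>
    (Iio_disjoint_Ioi_of_le (hf.le_leftLim hxy)).mono (fun _ hz => hz.2) (fun _ hz => hz.1)

lemma Monotone.exists_forall_le_and_forall_lt {f : ℝ → ℝ} (hf : Monotone f) {c : ℝ}
    (hle : ∃ x, f x ≤ c) (hlt : ∃ x, c < f x) :
    ∃ a, (∀ x < a, f x ≤ c) ∧ ∀ x, a < x → c < f x := by
  obtain ⟨x₁, hx₁⟩ := hlt
  have hbdd : BddAbove {x | f x ≤ c} :=
    ⟨x₁, fun y hy => le_of_not_gt fun h => (hx₁.trans_le (hf h.le)).not_ge hy⟩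
  refine ⟨sSup {x | f x ≤ c}, fun x hx => ?_, fun x hx => ?_⟩
  · obtain ⟨y, hy, hxy⟩ := exists_lt_of_lt_csSup hle hx
    exact (hf hxy.le).trans hy
  · exact lt_of_not_ge fun h => hx.not_ge (le_csSup hbdd h)

lemma volume_Ioo_inter_Iic (a b c : ℝ) :
    volume (Ioo a b ∩ Iic c) = ENNReal.ofReal (min b c - a) := by
  rcases le_or_gt b c with h | h
  · rw [inter_eq_self_of_subset_left fun z hz => hz.2.le.trans h, Real.volume_Ioo,
      min_eq_left h]
  · have : Ioo a b ∩ Iic c = Ioc a c := by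
      ext z
      simp only [mem_inter_iff, mem_Ioo, mem_Iic, mem_Ioc]
      constructor
      · exact fun hz => ⟨hz.1.1, hz.2⟩
      · exact fun hz => ⟨⟨hz.1, hz.2.trans_lt h⟩, hz.2⟩
    rw [this, min_eq_right h.le, Real.volume_Ioc]

lemma Iic_inter_iUnion_Ioo_leftLim (f : ℝ → ℝ) (c : ℝ) :
    Iic c ∩ ⋃ x, Ioo (leftLim f x) (f x) =
      (⋃ x ∈ {x | f x ≤ c}, Ioo (leftLim f x) (f x)) ∪
        ⋃ x ∈ {x | c < f x}, Ioc (leftLim f x) c := by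
  ext z
  simp only [mem_inter_iff, mem_union, mem_iUnion, mem_Iic, mem_Ioo, mem_Ioc, mem_ofPred_eq,
    exists_prop]
  constructor
  · rintro ⟨hzc, x, hxz, hzx⟩
    rcases le_or_gt (f x) c with h | h
    · exact Or.inl ⟨x, h, hxz, hzx⟩
    · exact Or.inr ⟨x, h, hxz, hzc⟩
  · rintro (⟨x, hxc, hxz, hzx⟩ | ⟨x, hcx, hxz, hzc⟩)
    · exact ⟨hzx.le.trans hxc, x, hxz, hzx⟩
    · exact ⟨hzc, x, hxz, hzc.trans_lt hcx⟩

lemma Monotone.disjoint_biUnion_Ioo_leftLim_biUnion_Ioc {f : ℝ → ℝ} (hf : Monotone f)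
    (c : ℝ) :
    Disjoint (⋃ x ∈ {x | f x ≤ c}, Ioo (leftLim f x) (f x))
      (⋃ x ∈ {x | c < f x}, Ioc (leftLim f x) c) := by
  simp only [disjoint_iUnion_left, disjoint_iUnion_right]
  intro y (hy : c < f y) x (hx : f x ≤ c)
  exact (Iio_disjoint_Ioi_of_le (hf.le_leftLim (hf.reflect_lt (hx.trans_lt hy)))).mono
    (fun _ hz => hz.2) (fun _ hz => hz.1)

namespace ProbabilityTheory

variable (μ : Measure ℝ)

lemma leftLim_cdf_nonneg (x : ℝ) : 0 ≤ leftLim (cdf μ) x :=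
  (cdf_nonneg μ (x - 1)).trans ((monotone_cdf μ).le_leftLim (sub_one_lt x))

variable [IsProbabilityMeasure μ]

lemma ofReal_leftLim_cdf (x : ℝ) : ENNReal.ofReal (leftLim (cdf μ) x) = μ (Iio x) := by
  simpa [measure_cdf] using ((cdf μ).measure_Iio (tendsto_cdf_atBot μ) x).symm

lemma measure_singleton_eq_ofReal_cdf_sub_leftLim (x : ℝ) :
    μ {x} = ENNReal.ofReal (cdf μ x - leftLim (cdf μ) x) := by
  simpa [measure_cdf] using (cdf μ).measure_singleton x

lemma measure_singleton_ne_zero_iff {x : ℝ} : μ {x} ≠ 0 ↔ leftLim (cdf μ) x < cdf μ x := by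
  simp [measure_singleton_eq_ofReal_cdf_sub_leftLim]

lemma countable_setOf_measure_singleton_ne_zero : {x : ℝ | μ {x} ≠ 0}.Countable :=
  (cdf μ).countable_leftLim_ne.mono fun _ hx =>
    ((measure_singleton_ne_zero_iff μ).1 hx).ne

lemma biUnion_Ioo_leftLim_cdf_inter_setOf_measure_singleton_ne_zero (s : Set ℝ) :
    ⋃ x ∈ s ∩ {x | μ {x} ≠ 0}, Ioo (leftLim (cdf μ) x) (cdf μ x) =
      ⋃ x ∈ s, Ioo (leftLim (cdf μ) x) (cdf μ x) := by
  ext z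
  simp only [mem_iUnion, mem_inter_iff, mem_ofPred_eq, measure_singleton_ne_zero_iff, mem_Ioo,
    exists_prop]
  exact exists_congr fun x =>
    ⟨fun h => ⟨h.1.1, h.2⟩, fun h => ⟨⟨h.1, h.2.1.trans h.2.2⟩, h.2⟩⟩

lemma volume_biUnion_Ioo_leftLim_cdf (s : Set ℝ) :
    volume (⋃ x ∈ s, Ioo (leftLim (cdf μ) x) (cdf μ x)) = μ (s ∩ {x | μ {x} ≠ 0}) := by
  have hs : (s ∩ {x | μ {x} ≠ 0}).Countable :=
    (countable_setOf_measure_singleton_ne_zero μ).mono inter_subset_right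
  rw [← biUnion_Ioo_leftLim_cdf_inter_setOf_measure_singleton_ne_zero,
    measure_biUnion hs ((monotone_cdf μ).pairwise_disjoint_Ioo_leftLim.set_pairwise _)
      fun _ _ => measurableSet_Ioo]
  conv_rhs => rw [← biUnion_of_singleton (s ∩ _),
    measure_biUnion hs (fun _ _ _ _ h => disjoint_singleton.2 h)
      fun _ _ => measurableSet_singleton _]
  simp only [Real.volume_Ioo, measure_singleton_eq_ofReal_cdf_sub_leftLim]

lemma measure_cdf_le_add_volume_biUnion_Ioc_of_forall {a c : ℝ}
    (hlt : ∀ x < a, cdf μ x ≤ c) (hgt : ∀ x, a < x → c < cdf μ x) :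
    μ {x | cdf μ x ≤ c} + volume (⋃ x ∈ {x | c < cdf μ x}, Ioc (leftLim (cdf μ) x) c) =
      ENNReal.ofReal (min 1 c) := by
  have hca : c ≤ cdf μ a :=
    ge_of_tendsto (((cdf μ).right_continuous a).mono Ioi_subset_Ici_self)
      (eventually_nhdsWithin_of_forall fun x hx => (hgt x hx).le)
  have hLa : leftLim (cdf μ) a ≤ c :=
    le_of_tendsto ((monotone_cdf μ).tendsto_leftLim a) (eventually_nhdsWithin_of_forall hlt)
  rw [min_eq_right (hca.trans (cdf_le_one μ a))]
  by_cases hac : cdf μ a ≤ c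
  · have hS : {x | cdf μ x ≤ c} = Iic a :=
      ext fun x => ⟨fun hx => le_of_not_gt fun h => (hgt x h).not_ge hx,
        fun hx => ((monotone_cdf μ) hx).trans hac⟩
    have hT : ⋃ x ∈ {x | c < cdf μ x}, Ioc (leftLim (cdf μ) x) c = ∅ := by
      refine subset_empty_iff.1
        (iUnion₂_subset fun x hx => (Ioc_eq_empty (not_lt.2 ?_)).subset)
      have hax : a < x := lt_of_not_ge fun h => (((monotone_cdf μ) h).trans hac).not_gt hx
      exact hca.trans ((monotone_cdf μ).le_leftLim hax)
    rw [hS, hT, ← ofReal_cdf, le_antisymm hac hca, measure_empty, add_zero]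
  · rw [not_le] at hac
    have hS : {x | cdf μ x ≤ c} = Iio a := by
      refine ext fun x => ⟨fun hx => show x < a from lt_of_not_ge fun h => ?_, hlt x⟩
      rcases h.eq_or_lt with rfl | h
      · exact hac.not_ge hx
      · exact (hgt x h).not_ge hx
    have hT :
        ⋃ x ∈ {x | c < cdf μ x}, Ioc (leftLim (cdf μ) x) c = Ioc (leftLim (cdf μ) a) c := by
      refine Subset.antisymm (iUnion₂_subset fun x hx => ?_)
        (subset_biUnion_of_mem (u := fun x => Ioc (leftLim (cdf μ) x) c) hac)
      rcases lt_trichotomy x a with h | rfl | h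
      · exact absurd (hlt x h) (not_le.2 hx)
      · exact subset_rfl
      · rw [Ioc_eq_empty (not_lt.2 (hac.le.trans ((monotone_cdf μ).le_leftLim h)))]
        exact empty_subset _
    rw [hS, hT, Real.volume_Ioc, ← ofReal_leftLim_cdf,
      ← ENNReal.ofReal_add (leftLim_cdf_nonneg μ a) (sub_nonneg.2 hLa), add_sub_cancel]

lemma measure_cdf_le_add_volume_biUnion_Ioc (c : ℝ) :
    μ {x | cdf μ x ≤ c} + volume (⋃ x ∈ {x | c < cdf μ x}, Ioc (leftLim (cdf μ) x) c) =
      ENNReal.ofReal (min 1 c) := by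
  by_cases hT : ∃ x, c < cdf μ x
  · by_cases hS : ∃ x, cdf μ x ≤ c
    · obtain ⟨a, hlt, hgt⟩ := (monotone_cdf μ).exists_forall_le_and_forall_lt hS hT
      exact measure_cdf_le_add_volume_biUnion_Ioc_of_forall μ hlt hgt
    · push Not at hS
      have hc : c ≤ 0 :=
        ge_of_tendsto (tendsto_cdf_atBot μ) (Eventually.of_forall fun x => (hS x).le)
      have hT : ⋃ x ∈ {x | c < cdf μ x}, Ioc (leftLim (cdf μ) x) c = ∅ :=
        subset_empty_iff.1 (iUnion₂_subset fun x _ =>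
          (Ioc_eq_empty (not_lt.2 (hc.trans (leftLim_cdf_nonneg μ x)))).subset)
      rw [hT]
      simp [fun x => not_le.2 (hS x), ENNReal.ofReal_eq_zero.2 ((min_le_right 1 c).trans hc)]
  · push Not at hT
    have h1c : 1 ≤ c := le_of_tendsto' (tendsto_cdf_atTop μ) hT
    simp [hT, min_eq_left h1c]

theorem map_cdf_restrict_setOf_measure_singleton_eq_zero :
    (μ.restrict {x | μ {x} = 0}).map (cdf μ) =
      volume.restrict (Ioo 0 1 \ ⋃ x, Ioo (leftLim (cdf μ) x) (cdf μ x)) := by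
  set K := ⋃ x, Ioo (leftLim (cdf μ) x) (cdf μ x)
  have hF : Measurable (cdf μ) := (monotone_cdf μ).measurable
  have hK : K ⊆ Ioo 0 1 := iUnion_subset fun x _ hz =>
    ⟨(leftLim_cdf_nonneg μ x).trans_lt hz.1, hz.2.trans_le (cdf_le_one μ x)⟩
  have hKmeas : MeasurableSet K := (isOpen_iUnion fun _ => isOpen_Ioo).measurableSet
  have hA : MeasurableSet {x | μ {x} ≠ 0} :=
    (countable_setOf_measure_singleton_ne_zero μ).measurableSet
  refine Measure.ext_of_Iic _ _ fun c => ?_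
  rw [Measure.map_apply hF measurableSet_Iic, Measure.restrict_apply (hF measurableSet_Iic),
    Measure.restrict_apply measurableSet_Iic]
  have hμ : μ (cdf μ ⁻¹' Iic c ∩ {x | μ {x} = 0}) +
      μ ({x | cdf μ x ≤ c} ∩ {x | μ {x} ≠ 0}) = μ {x | cdf μ x ≤ c} := by
    have hA0 : {x : ℝ | μ {x} = 0} = {x | μ {x} ≠ 0}ᶜ := by ext; simp
    rw [hA0, ← sdiff_eq, add_comm]
    exact measure_inter_add_sdiff _ hA
  have hvol :
      volume (Iic c ∩ (Ioo 0 1 \ K)) + volume (Iic c ∩ K) = ENNReal.ofReal (min 1 c) := by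
    have hdiff : Iic c ∩ (Ioo 0 1 \ K) = (Ioo 0 1 ∩ Iic c) \ K := by
      ext z
      simp only [mem_inter_iff, Set.mem_sdiff]
      tauto
    have hinter : Iic c ∩ K = (Ioo 0 1 ∩ Iic c) ∩ K := by
      rw [inter_comm (Ioo 0 1), inter_assoc, inter_eq_self_of_subset_right hK]
    rw [hdiff, hinter, measure_sdiff_add_inter _ hKmeas, volume_Ioo_inter_Iic, sub_zero]
  have hsplit : volume (Iic c ∩ K) = μ ({x | cdf μ x ≤ c} ∩ {x | μ {x} ≠ 0}) +
      volume (⋃ x ∈ {x | c < cdf μ x}, Ioc (leftLim (cdf μ) x) c) := by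
    rw [Iic_inter_iUnion_Ioo_leftLim,
      measure_union' ((monotone_cdf μ).disjoint_biUnion_Ioo_leftLim_biUnion_Ioc c)
        (isOpen_biUnion fun _ _ => isOpen_Ioo).measurableSet,
      volume_biUnion_Ioo_leftLim_cdf]
  have hfin : volume (Iic c ∩ K) ≠ ∞ :=
    ne_top_of_le_ne_top ENNReal.ofReal_ne_top (le_add_self.trans_eq hvol)
  refine (ENNReal.add_left_inj hfin).1 ?_
  rw [hvol, hsplit, ← add_assoc, hμ, measure_cdf_le_add_volume_biUnion_Ioc]

end ProbabilityTheory

theorem stmt_1_general (μ : Measure ℝ) [IsProbabilityMeasure μ]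
    (M Mleft : ℝ → ℝ)
    (hM : ∀ x, M x = (μ (Iic x)).toReal)
    (hMleft : ∀ x, Mleft x = (μ (Iio x)).toReal)
    (ρ : Measure ℝ)
    (hρ : ρ = μ.restrict {x : ℝ | μ {x} = 0})
    (J : Set ℝ)
    (hJ : J = ⋃ x ∈ {x : ℝ | μ {x} ≠ 0}, Ioo (Mleft x) (M x)) :
    Measure.map M ρ = volume.restrict (Ioo (0:ℝ) 1 \ J) := by
  obtain rfl : M = cdf μ := funext fun x => by rw [hM, cdf_eq_real, measureReal_def]
  obtain rfl : Mleft = leftLim (cdf μ) := funext fun x => by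
    rw [hMleft, ← ofReal_leftLim_cdf, ENNReal.toReal_ofReal (leftLim_cdf_nonneg μ x)]
  have hjumps := biUnion_Ioo_leftLim_cdf_inter_setOf_measure_singleton_ne_zero μ univ
  rw [univ_inter, biUnion_univ] at hjumps
  rw [hρ, hJ, hjumps]
  exact map_cdf_restrict_setOf_measure_singleton_eq_zero μ

/-- Decomposition lemma: if `μ` is a Borel probability measure with right-continuous CDF `M`,
and `ρ` is its diffuse (atomless) part, then, provided `ρ ≠ 0`, the pushforward `M_# ρ` equals
Lebesgue measure on `(0,1)` restricted to the complement of the jump set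
`J = ⋃_{atoms x} (M(x-), M(x))`. -/
theorem stmt_1 (μ : Measure ℝ) [IsProbabilityMeasure μ]
    (M Mleft : ℝ → ℝ)
    (hM : ∀ x, M x = (μ (Iic x)).toReal)
    (hMleft : ∀ x, Mleft x = (μ (Iio x)).toReal)
    (ρ : Measure ℝ)
    (hρ : ρ = μ.restrict {x : ℝ | μ {x} = 0})
    (hρ0 : ρ ≠ 0)
    (J : Set ℝ)
    (hJ : J = ⋃ x ∈ {x : ℝ | μ {x} ≠ 0}, Ioo (Mleft x) (M x)) :
    Measure.map M ρ = volume.restrict (Ioo (0:ℝ) 1 \ J) :=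
  stmt_1_general μ M Mleft hM hMleft ρ hρ J hJ
end

section
/- Let μ be a Borel probability measure on ℝ with right-continuous distribution function M, f ∈ L^p(0,1) for p ∈ [1,∞), and F(m) = ∫₀^m f(ω)dω. Define g(x) = f(M(x)) at points x with μ({x}) = 0, and g(x) = (F(M(x)) − F(M(x−)))/μ({x}) at atoms. Then g ∈ L^p(ℝ,μ) with ‖g‖_{L^p(ℝ,μ)} ≤ ‖f‖_{L^p(0,1)}, with equality whenever μ has no atoms. -/
/-!
Let `Q` be the quantile function of `μ`; it pushes Lebesgue measure on `(0,1)` forward to `μ`, so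
`‖g‖_{L^p(μ)} = ‖g ∘ Q‖_{L^p(0,1)}`. Off the atoms of `μ` we have `M ∘ Q = id`, hence `g ∘ Q = f`
there. Over an atom `x` the fibre of `Q` is, up to a null set, the interval `(M(x−), M(x))` of
length `μ{x}`, on which `g ∘ Q` is the constant average of `f`; Jensen's inequality bounds
`|g x|^p μ{x}` by `∫ |f|^p` over that fibre. Summing over the countably many atoms gives the
inequality, and without atoms `g = f ∘ M` and `M` pushes `μ` forward to Lebesgue measure on `(0,1)`.
-/

open MeasureTheory Set ProbabilityTheory Function
open scoped ENNReal

section SetAverage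

variable {α : Type*} [MeasurableSpace α] {ν : Measure α} {s : Set α} {f : α → ℝ} {p : ℝ≥0∞}

lemma abs_rpow_setAverage_mul_le {q : ℝ} (hq : 1 ≤ q) (hs : ν s ≠ ∞) (hfi : IntegrableOn f s ν)
    (hfqi : IntegrableOn (fun x ↦ |f x| ^ q) s ν) :
    |⨍ x in s, f x ∂ν| ^ q * ν.real s ≤ ∫ x in s, |f x| ^ q ∂ν := by
  rcases eq_or_ne (ν s) 0 with h0 | h0
  · simp [measureReal_def, h0]
  have hq0 : 0 ≤ q := zero_le_one.trans hq
  have hpos : 0 < ν.real s := ENNReal.toReal_pos h0 hs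
  have habs : |⨍ x in s, f x ∂ν| ≤ ⨍ x in s, |f x| ∂ν := by
    simp only [setAverage_eq, smul_eq_mul, abs_mul, abs_inv, abs_of_pos hpos]
    exact mul_le_mul_of_nonneg_left (abs_integral_le_integral_abs) (by positivity)
  have hjensen : (⨍ x in s, |f x| ∂ν) ^ q ≤ ⨍ x in s, |f x| ^ q ∂ν :=
    (convexOn_rpow hq).map_set_average_le (continuousOn_id.rpow_const fun _ _ ↦ Or.inr hq0)
      isClosed_Ici h0 hs (ae_of_all _ fun x ↦ abs_nonneg (f x)) hfi.abs hfqi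
  calc |⨍ x in s, f x ∂ν| ^ q * ν.real s
      ≤ (⨍ x in s, |f x| ^ q ∂ν) * ν.real s := by
        gcongr
        exact (Real.rpow_le_rpow (abs_nonneg _) habs hq0).trans hjensen
    _ = ∫ x in s, |f x| ^ q ∂ν := by
        rw [setAverage_eq, smul_eq_mul]
        field_simp

lemma enorm_setAverage_rpow_mul_le (hp : 1 ≤ p) (hp' : p ≠ ∞) (hs : ν s ≠ ∞)
    (hf : MemLp f p (ν.restrict s)) :
    ‖⨍ x in s, f x ∂ν‖ₑ ^ p.toReal * ν s ≤ ∫⁻ x in s, ‖f x‖ₑ ^ p.toReal ∂ν := by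
  have : IsFiniteMeasure (ν.restrict s) := isFiniteMeasure_restrict.2 hs
  have hfqi : IntegrableOn (fun x ↦ |f x| ^ p.toReal) s ν := by
    have h := hf.integrable_norm_rpow (by positivity) hp'
    simp only [Real.norm_eq_abs] at h
    exact h
  have henorm (a : ℝ) : ‖a‖ₑ ^ p.toReal = ENNReal.ofReal (|a| ^ p.toReal) := by
    rw [Real.enorm_eq_ofReal_abs, ENNReal.ofReal_rpow_of_nonneg (abs_nonneg a) (by positivity)]
  simp only [henorm]
  rw [← ofReal_integral_eq_lintegral_ofReal hfqi (ae_of_all _ fun x ↦ by positivity),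
    ← ofReal_measureReal hs, ← ENNReal.ofReal_mul (by positivity)]
  exact ENNReal.ofReal_le_ofReal <| abs_rpow_setAverage_mul_le
    (by simpa using ENNReal.toReal_mono hp' hp) hs (hf.integrable hp) hfqi

lemma setLIntegral_enorm_rpow_le_of_eq_setAverage {β : Type*} [MeasurableSpace β]
    [MeasurableSingletonClass β] {μ : Measure β} [IsFiniteMeasure μ] {Q : α → β}
    (hQ : Measurable Q) (hνμ : ν.map Q = μ) {S : Set β} (hS : S.Countable) {g : β → ℝ}
    (hp : 1 ≤ p) (hp' : p ≠ ∞) (hf : MemLp f p ν)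
    (hg : ∀ x ∈ S, g x = ⨍ u in Q ⁻¹' {x}, f u ∂ν) :
    ∫⁻ x in S, ‖g x‖ₑ ^ p.toReal ∂μ ≤ ∫⁻ u in Q ⁻¹' S, ‖f u‖ₑ ^ p.toReal ∂ν := by
  have hfiber (x : β) : ν (Q ⁻¹' {x}) = μ {x} := by
    rw [← hνμ, Measure.map_apply hQ (measurableSet_singleton x)]
  calc ∫⁻ x in S, ‖g x‖ₑ ^ p.toReal ∂μ
      = ∑' x : S, ‖g x‖ₑ ^ p.toReal * μ {(x : β)} := lintegral_countable _ hS
    _ ≤ ∑' x : S, ∫⁻ u in Q ⁻¹' {(x : β)}, ‖f u‖ₑ ^ p.toReal ∂ν := by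
        refine ENNReal.tsum_le_tsum fun x ↦ ?_
        rw [← hfiber, hg x x.2]
        exact enorm_setAverage_rpow_mul_le hp hp' (hfiber x ▸ measure_ne_top _ _) (hf.restrict _)
    _ = ∫⁻ u in ⋃ x ∈ S, Q ⁻¹' {x}, ‖f u‖ₑ ^ p.toReal ∂ν :=
        (lintegral_biUnion₀ hS (fun x _ ↦ (hQ (measurableSet_singleton x)).nullMeasurableSet)
          (fun x _ y _ hxy ↦ ((disjoint_singleton.2 hxy).preimage Q).aedisjoint) _).symm
    _ = ∫⁻ u in Q ⁻¹' S, ‖f u‖ₑ ^ p.toReal ∂ν := by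
        rw [← preimage_iUnion₂, biUnion_of_singleton]

end SetAverage

lemma setIntegral_Ioo_sub_setIntegral_Ioo {E : Type*} [NormedAddCommGroup E] [NormedSpace ℝ E]
    {f : ℝ → E} {a b c : ℝ} (hab : a ≤ b) (hbc : b ≤ c) (hf : IntegrableOn f (Ioo a c)) :
    (∫ x in Ioo a c, f x) - ∫ x in Ioo a b, f x = ∫ x in Ioo b c, f x := by
  have hf' : IntegrableOn f (Ioc a c) := (integrableOn_Ioc_iff_integrableOn_Ioo enorm_ne_top).2 hf
  simp only [← integral_Ioc_eq_integral_Ioo, ← intervalIntegral.integral_of_le (hab.trans hbc),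
    ← intervalIntegral.integral_of_le hab, ← intervalIntegral.integral_of_le hbc]
  exact intervalIntegral.integral_interval_sub_left
    ((intervalIntegrable_iff_integrableOn_Ioc_of_le (hab.trans hbc)).2 hf')
    ((intervalIntegrable_iff_integrableOn_Ioc_of_le hab).2
      (hf'.mono_set (Ioc_subset_Ioc_right hbc)))

lemma aestronglyMeasurable_of_restrict_compl_of_countable {α β : Type*} [MeasurableSpace α]
    [MeasurableSingletonClass α] [TopologicalSpace β] [TopologicalSpace.PseudoMetrizableSpace β]
    [SecondCountableTopology β] [MeasurableSpace β] [OpensMeasurableSpace β] [Zero β]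
    {μ : Measure α} {s : Set α} {g : α → β} (hs : s.Countable)
    (hg : AEStronglyMeasurable g (μ.restrict sᶜ)) : AEStronglyMeasurable g μ := by
  have hind : Measurable (s.indicator g) :=
    measurable_const.measurable_of_countable_ne <| hs.mono fun x hx ↦
      by_contra fun hxs ↦ hx (indicator_of_notMem hxs g).symm
  have hgs : AEStronglyMeasurable g (μ.restrict s) :=
    hind.aestronglyMeasurable.congr (indicator_ae_eq_restrict hs.measurableSet)
  rw [← Measure.restrict_univ (μ := μ), ← union_compl_self s]
  exact aestronglyMeasurable_union_iff.2 ⟨hgs, hg⟩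

namespace MeasureTheory.Measure

variable {α : Type*} [MeasurableSpace α]

def atoms (ν : Measure α) : Set α := {x | ν {x} ≠ 0}

lemma countable_atoms [MeasurableSingletonClass α] (ν : Measure α) [SFinite ν] :
    ν.atoms.Countable := by
  simpa [atoms, pos_iff_ne_zero] using countable_meas_level_set_pos (μ := ν) measurable_id

lemma measurableSet_atoms [MeasurableSingletonClass α] (ν : Measure α) [SFinite ν] :
    MeasurableSet ν.atoms :=
  ν.countable_atoms.measurableSet

lemma atoms_eq_empty (ν : Measure α) [NullSingletonClass ν] : ν.atoms = ∅ :=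
  eq_empty_of_forall_notMem fun x hx ↦ hx (measure_singleton x)

end MeasureTheory.Measure

/-- The generalized inverse of `cdf μ`. The set is nonempty and bounded below only for
`u ∈ (0,1)`; the value `0` elsewhere is arbitrary and never used. -/
noncomputable def quantile (μ : Measure ℝ) (u : ℝ) : ℝ :=
  if u ∈ Ioo 0 1 then sInf {x | u ≤ cdf μ x} else 0

section Quantile

variable {μ : Measure ℝ} {u : ℝ}

lemma quantile_le_iff (hu : u ∈ Ioo 0 1) (x : ℝ) : quantile μ u ≤ x ↔ u ≤ cdf μ x := by
  set S := {y | u ≤ cdf μ y}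
  have hne : S.Nonempty := ((tendsto_cdf_atTop μ).eventually (eventually_ge_nhds hu.2)).exists
  obtain ⟨y₀, hy₀⟩ := ((tendsto_cdf_atBot μ).eventually (eventually_lt_nhds hu.1)).exists
  have hbdd : BddBelow S := ⟨y₀, fun y hy ↦ not_lt.1 fun hlt ↦
    (hy.trans (monotone_cdf μ hlt.le)).not_gt hy₀⟩
  rw [quantile, if_pos hu]
  refine ⟨fun h ↦ ?_, fun h ↦ csInf_le hbdd h⟩
  refine ge_of_tendsto ((cdf μ).right_continuous x |>.mono_left
    (nhdsWithin_mono x Ioi_subset_Ici_self)) ?_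
  filter_upwards [self_mem_nhdsWithin] with y hy
  obtain ⟨z, hz, hzy⟩ := (csInf_lt_iff hbdd hne).1 (h.trans_lt hy)
  exact hz.trans (monotone_cdf μ hzy.le)

lemma le_cdf_quantile (hu : u ∈ Ioo 0 1) : u ≤ cdf μ (quantile μ u) :=
  (quantile_le_iff hu _).1 le_rfl

lemma leftLim_cdf_quantile_le (hu : u ∈ Ioo 0 1) : leftLim (cdf μ) (quantile μ u) ≤ u := by
  refine le_of_tendsto ((monotone_cdf μ).tendsto_leftLim _) ?_
  filter_upwards [self_mem_nhdsWithin] with y (hy : y < quantile μ u)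
  exact (not_le.1 fun h ↦ hy.not_ge ((quantile_le_iff hu y).2 h)).le

lemma measurable_quantile : Measurable (quantile μ) := by
  refine measurable_of_Iic fun x ↦ ?_
  have : quantile μ ⁻¹' Iic x =
      Ioo 0 1 ∩ Iic (cdf μ x) ∪ (Ioo 0 1)ᶜ ∩ {_u | (0 : ℝ) ≤ x} := by
    ext u
    by_cases hu : u ∈ Ioo 0 1
    · simp [hu, quantile_le_iff hu]
    · simp [hu, quantile]
  rw [this]
  exact (measurableSet_Ioo.inter measurableSet_Iic).union
    (measurableSet_Ioo.compl.inter (MeasurableSet.const _))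

lemma leftLim_cdf_nonneg (x : ℝ) : 0 ≤ leftLim (cdf μ) x :=
  (cdf_nonneg μ (x - 1)).trans ((monotone_cdf μ).le_leftLim (by linarith))

lemma quantile_preimage_singleton_ae_eq (x : ℝ) :
    (Ioo 0 1 ∩ quantile μ ⁻¹' {x} : Set ℝ) =ᵐ[volume] Ioo (leftLim (cdf μ) x) (cdf μ x) := by
  have hsup : Ioo 0 1 ∩ quantile μ ⁻¹' {x} ⊆ Icc (leftLim (cdf μ) x) (cdf μ x) :=
    fun u ⟨hu, (hx : quantile μ u = x)⟩ ↦ hx ▸ ⟨leftLim_cdf_quantile_le hu, le_cdf_quantile hu⟩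
  have hsub : Ioo (leftLim (cdf μ) x) (cdf μ x) ⊆ Ioo 0 1 ∩ quantile μ ⁻¹' {x} := by
    intro u hu
    have hu01 : u ∈ Ioo 0 1 :=
      ⟨(leftLim_cdf_nonneg x).trans_lt hu.1, hu.2.trans_le (cdf_le_one μ x)⟩
    refine ⟨hu01, le_antisymm ((quantile_le_iff hu01 x).2 hu.2.le) (not_lt.1 fun hlt ↦ ?_)⟩
    exact ((le_cdf_quantile hu01).trans ((monotone_cdf μ).le_leftLim hlt)).not_gt hu.1
  exact (hsup.eventuallyLE.trans Ioo_ae_eq_Icc.symm.le).antisymm hsub.eventuallyLE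

variable [IsProbabilityMeasure μ]

lemma map_quantile : (volume.restrict (Ioo 0 1)).map (quantile μ) = μ := by
  have : IsProbabilityMeasure (volume.restrict (Ioo (0 : ℝ) 1)) := ⟨by simp⟩
  have : IsProbabilityMeasure ((volume.restrict (Ioo (0 : ℝ) 1)).map (quantile μ)) :=
    Measure.isProbabilityMeasure_map measurable_quantile.aemeasurable
  refine Measure.ext_of_Iic _ _ fun x ↦ ?_
  have hset : quantile μ ⁻¹' Iic x ∩ Ioo 0 1 = Ioo 0 1 ∩ Iic (cdf μ x) := by
    ext u
    by_cases hu : u ∈ Ioo 0 1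
    · simp [hu, quantile_le_iff hu]
    · simp [hu]
  rw [Measure.map_apply measurable_quantile measurableSet_Iic,
    Measure.restrict_apply (measurable_quantile measurableSet_Iic), hset, ← ofReal_cdf]
  refine le_antisymm ?_ ?_
  · calc volume (Ioo 0 1 ∩ Iic (cdf μ x)) ≤ volume (Ioc 0 (cdf μ x)) :=
          measure_mono fun u hu ↦ ⟨hu.1.1, hu.2⟩
      _ = _ := by simp
  · calc ENNReal.ofReal (cdf μ x) = volume (Ioo 0 (cdf μ x)) := by simp
      _ ≤ _ := measure_mono fun u (hu : u ∈ Ioo 0 (cdf μ x)) ↦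
          (⟨⟨hu.1, hu.2.trans_le (cdf_le_one μ x)⟩, hu.2.le⟩ : u ∈ Ioo 0 1 ∩ Iic (cdf μ x))

lemma measure_singleton_eq_ofReal_cdf_sub_leftLim (x : ℝ) :
    μ {x} = ENNReal.ofReal (cdf μ x - leftLim (cdf μ) x) := by
  rw [← (cdf μ).measure_singleton, measure_cdf]

lemma measure_Iio_eq_ofReal_leftLim_cdf (x : ℝ) :
    μ (Iio x) = ENNReal.ofReal (leftLim (cdf μ) x) := by
  simpa [measure_cdf] using (cdf μ).measure_Iio (tendsto_cdf_atBot μ) x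

lemma cdf_quantile (hu : u ∈ Ioo 0 1) (h : μ {quantile μ u} = 0) :
    cdf μ (quantile μ u) = u := by
  rw [measure_singleton_eq_ofReal_cdf_sub_leftLim, ENNReal.ofReal_eq_zero, sub_nonpos] at h
  exact le_antisymm (h.trans (leftLim_cdf_quantile_le hu)) (le_cdf_quantile hu)

lemma map_cdf_restrict_compl_atoms :
    (μ.restrict μ.atomsᶜ).map (cdf μ) =
      (volume.restrict (Ioo 0 1)).restrict (quantile μ ⁻¹' μ.atomsᶜ) := by
  have hQN : MeasurableSet (quantile μ ⁻¹' μ.atomsᶜ) :=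
    measurable_quantile μ.measurableSet_atoms.compl
  have hcQ : cdf μ ∘ quantile μ =ᵐ[(volume.restrict (Ioo 0 1)).restrict (quantile μ ⁻¹' μ.atomsᶜ)]
      id := by
    rw [Measure.restrict_restrict hQN]
    exact ae_restrict_of_forall_mem (hQN.inter measurableSet_Ioo)
      fun u hu ↦ cdf_quantile hu.2 (not_not.1 hu.1)
  calc (μ.restrict μ.atomsᶜ).map (cdf μ)
      = (((volume.restrict (Ioo 0 1)).map (quantile μ)).restrict μ.atomsᶜ).map (cdf μ) := by
        rw [map_quantile]
    _ = ((volume.restrict (Ioo 0 1)).restrict (quantile μ ⁻¹' μ.atomsᶜ)).map id := by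
        rw [Measure.restrict_map measurable_quantile μ.measurableSet_atoms.compl,
          Measure.map_map (monotone_cdf μ).measurable measurable_quantile, Measure.map_congr hcQ]
    _ = _ := Measure.map_id

lemma setLIntegral_compl_atoms_comp_cdf {h : ℝ → ℝ≥0∞}
    (hh : AEMeasurable h (volume.restrict (Ioo 0 1))) :
    ∫⁻ x in μ.atomsᶜ, h (cdf μ x) ∂μ =
      ∫⁻ u in quantile μ ⁻¹' μ.atomsᶜ, h u ∂(volume.restrict (Ioo 0 1)) := by
  rw [← map_cdf_restrict_compl_atoms, lintegral_map' _ (monotone_cdf μ).measurable.aemeasurable]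
  rw [map_cdf_restrict_compl_atoms]
  exact hh.restrict

lemma setAverage_quantile_preimage_singleton {f : ℝ → ℝ}
    (hf : IntegrableOn f (Ioo 0 1)) (x : ℝ) :
    ⨍ u in quantile μ ⁻¹' {x}, f u ∂(volume.restrict (Ioo 0 1)) =
      ((∫ u in Ioo 0 (cdf μ x), f u) - ∫ u in Ioo 0 (leftLim (cdf μ) x), f u) / μ.real {x} := by
  have hQx : MeasurableSet (quantile μ ⁻¹' {x}) := measurable_quantile (measurableSet_singleton x)
  have hmass : (volume.restrict (Ioo 0 1)).real (quantile μ ⁻¹' {x}) = μ.real {x} := by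
    simp only [measureReal_def]
    rw [← Measure.map_apply measurable_quantile (measurableSet_singleton x), map_quantile]
  have hint : ∫ u in quantile μ ⁻¹' {x}, f u ∂(volume.restrict (Ioo 0 1)) =
      ∫ u in Ioo (leftLim (cdf μ) x) (cdf μ x), f u := by
    rw [Measure.restrict_restrict hQx, inter_comm,
      setIntegral_congr_set (quantile_preimage_singleton_ae_eq x)]
  rw [setAverage_eq, hmass, hint, setIntegral_Ioo_sub_setIntegral_Ioo (leftLim_cdf_nonneg x)
    ((monotone_cdf μ).leftLim_le le_rfl) (hf.mono_set (Ioo_subset_Ioo_right (cdf_le_one μ x))),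
    smul_eq_mul, div_eq_inv_mul]

lemma map_cdf [NullSingletonClass μ] :
    μ.map (cdf μ) = volume.restrict (Ioo 0 1) := by
  simpa [μ.atoms_eq_empty] using map_cdf_restrict_compl_atoms (μ := μ)

lemma aestronglyMeasurable_of_eqOn_compl_atoms {f g : ℝ → ℝ}
    (hf : AEStronglyMeasurable f (volume.restrict (Ioo 0 1))) (hg : EqOn g (f ∘ cdf μ) μ.atomsᶜ) :
    AEStronglyMeasurable g μ := by
  refine aestronglyMeasurable_of_restrict_compl_of_countable μ.countable_atoms ?_
  refine AEStronglyMeasurable.congr ?_ (ae_restrict_of_forall_mem μ.measurableSet_atoms.compl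
    fun x hx ↦ (hg hx).symm)
  refine AEStronglyMeasurable.comp_aemeasurable ?_ (monotone_cdf μ).measurable.aemeasurable
  rw [map_cdf_restrict_compl_atoms]
  exact hf.restrict

lemma eLpNorm_le_of_eqOn_compl_atoms_of_eq_setAverage {f g : ℝ → ℝ}
    {p : ℝ≥0∞} (hp : 1 ≤ p) (hp' : p ≠ ∞) (hf : MemLp f p (volume.restrict (Ioo 0 1)))
    (hgN : EqOn g (f ∘ cdf μ) μ.atomsᶜ)
    (hgA : ∀ x ∈ μ.atoms, g x = ⨍ u in quantile μ ⁻¹' {x}, f u ∂(volume.restrict (Ioo 0 1))) :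
    eLpNorm g p μ ≤ eLpNorm f p (volume.restrict (Ioo 0 1)) := by
  set ν := volume.restrict (Ioo (0 : ℝ) 1)
  have hA := μ.measurableSet_atoms
  have hdiffuse : ∫⁻ x in μ.atomsᶜ, ‖g x‖ₑ ^ p.toReal ∂μ =
      ∫⁻ u in quantile μ ⁻¹' μ.atomsᶜ, ‖f u‖ₑ ^ p.toReal ∂ν := by
    rw [setLIntegral_congr_fun hA.compl fun x hx ↦ by rw [hgN hx, comp_apply]]
    exact setLIntegral_compl_atoms_comp_cdf (hf.1.enorm.pow_const _)
  have hatoms : ∫⁻ x in μ.atoms, ‖g x‖ₑ ^ p.toReal ∂μ ≤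
      ∫⁻ u in quantile μ ⁻¹' μ.atoms, ‖f u‖ₑ ^ p.toReal ∂ν :=
    setLIntegral_enorm_rpow_le_of_eq_setAverage measurable_quantile map_quantile
      μ.countable_atoms hp hp' hf hgA
  have hlint : ∫⁻ x, ‖g x‖ₑ ^ p.toReal ∂μ ≤ ∫⁻ u, ‖f u‖ₑ ^ p.toReal ∂ν :=
    calc ∫⁻ x, ‖g x‖ₑ ^ p.toReal ∂μ
        = ∫⁻ x in μ.atoms, ‖g x‖ₑ ^ p.toReal ∂μ + ∫⁻ x in μ.atomsᶜ, ‖g x‖ₑ ^ p.toReal ∂μ :=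
          (lintegral_add_compl _ hA).symm
      _ ≤ ∫⁻ u in quantile μ ⁻¹' μ.atoms, ‖f u‖ₑ ^ p.toReal ∂ν +
            ∫⁻ u in quantile μ ⁻¹' μ.atomsᶜ, ‖f u‖ₑ ^ p.toReal ∂ν :=
          add_le_add hatoms hdiffuse.le
      _ = ∫⁻ u, ‖f u‖ₑ ^ p.toReal ∂ν := lintegral_add_compl _ (measurable_quantile hA)
  rw [eLpNorm_eq_lintegral_rpow_enorm_toReal (by positivity) hp',
    eLpNorm_eq_lintegral_rpow_enorm_toReal (by positivity) hp']
  exact ENNReal.rpow_le_rpow hlint (by positivity)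

end Quantile

/-- Generalized BV chain rule, `L^p` bound: with `g = f ∘ M` off atoms and the difference
quotient of `F ∘ M` at atoms, `g ∈ L^p(ℝ, μ)` with `‖g‖_{L^p(μ)} ≤ ‖f‖_{L^p(0,1)}`, with
equality whenever `μ` has no atoms. -/
theorem stmt_2 (μ : Measure ℝ) [IsProbabilityMeasure μ]
    (p : ℝ≥0∞) (hp : 1 ≤ p) (hp' : p ≠ ⊤)
    (f F M Mleft g : ℝ → ℝ)
    (hf : MemLp f p (volume.restrict (Ioo (0:ℝ) 1)))
    (hF : ∀ m, F m = ∫ ω in Ioo (0:ℝ) m, f ω)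
    (hM : ∀ x, M x = (μ (Iic x)).toReal)
    (hMleft : ∀ x, Mleft x = (μ (Iio x)).toReal)
    (hg : ∀ x, g x = if μ {x} = 0 then f (M x)
      else (F (M x) - F (Mleft x)) / (μ {x}).toReal) :
    MemLp g p μ ∧
      eLpNorm g p μ ≤ eLpNorm f p (volume.restrict (Ioo (0:ℝ) 1)) ∧
      (∀ _ : NoAtoms μ, eLpNorm g p μ = eLpNorm f p (volume.restrict (Ioo (0:ℝ) 1))) := by
  have hgN : EqOn g (f ∘ cdf μ) μ.atomsᶜ := fun x hx ↦ by
    rw [hg, if_pos (not_not.1 hx), hM, comp_apply, cdf_eq_real, measureReal_def]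
  have hgA : ∀ x ∈ μ.atoms,
      g x = ⨍ u in quantile μ ⁻¹' {x}, f u ∂(volume.restrict (Ioo 0 1)) := fun x hx ↦ by
    rw [hg, if_neg hx, hF, hF, hM, hMleft,
      setAverage_quantile_preimage_singleton (hf.integrable hp), measure_Iio_eq_ofReal_leftLim_cdf,
      ENNReal.toReal_ofReal (leftLim_cdf_nonneg x), cdf_eq_real, measureReal_def, measureReal_def]
  have hle := eLpNorm_le_of_eqOn_compl_atoms_of_eq_setAverage hp hp' hf hgN hgA
  refine ⟨⟨aestronglyMeasurable_of_eqOn_compl_atoms hf.1 hgN, hle.trans_lt hf.2⟩, hle, ?_⟩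
  intro hμ
  -- `NoAtoms` is a deprecated alias of `NullSingletonClass` that instance search does not unfold
  have : NullSingletonClass μ := hμ
  have hg' : g = f ∘ cdf μ := funext fun x ↦ hgN (by simp [μ.atoms_eq_empty])
  rw [hg', ← eLpNorm_map_measure (by rw [map_cdf]; exact hf.1)
    (monotone_cdf μ).measurable.aemeasurable, map_cdf]
end

section
/- Let K be the cone of nondecreasing functions in L²(0,1), and for X ∈ K let N_X K = {W ∈ L²(0,1) : ∫₀¹ W(Y − X) dm ≤ 0 for all Y ∈ K} be the normal cone. If X₁, X₂ ∈ K satisfy Ω_{X₁} ⊆ Ω_{X₂} (where Ω_X is the set of points where X is locally constant), then N_{X₁} K ⊆ N_{X₂} K. -/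
open MeasureTheory Set
open scoped ENNReal

/-- The set of points of `(0,1)` where `X` is constant in a neighborhood. -/
def locallyConstantSet (X : ℝ → ℝ) : Set ℝ :=
  {m | m ∈ Ioo (0:ℝ) 1 ∧
    ∃ ε > 0, ∀ y ∈ Metric.ball m ε, ∀ z ∈ Metric.ball m ε, X y = X z}

/-- The normal cone of the cone `K` of nondecreasing `L²(0,1)` functions at `X`. -/
def normalCone (X : ℝ → ℝ) : Set (ℝ → ℝ) :=
  {W | MemLp W 2 (volume.restrict (Ioo (0:ℝ) 1)) ∧
    ∀ Y : ℝ → ℝ, MonotoneOn Y (Ioo (0:ℝ) 1) →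
      MemLp Y 2 (volume.restrict (Ioo (0:ℝ) 1)) →
      (∫ m in Ioo (0:ℝ) 1, W m * (Y m - X m)) ≤ 0}

open Filter Topology

/-!
Let `W ∈ N_{X₁} K` and let `Ξ_W(t) = ∫₀ᵗ W`. Testing the normal cone with constants and with
indicators of `(r, 1)` gives `∫ W = 0` and `Ξ_W ≥ 0`. If `X₁(y) < X₁(z)`, testing with `X₁` minus
its clamp to `[X₁ y, X₁ z]` shows that `Ξ_W` vanishes somewhere in `[y, z]`; by continuity `Ξ_W`
vanishes at every point outside `Ω_{X₁}`.

For a monotone `Z`, the pairing of `W` with the level set `{l ≤ Z}` equals `-Ξ_W(s)`, where `s`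
is the point at which `Z` crosses `l`, and `s ∉ Ω_Z`. So if `Ω_{X₁} ⊆ Ω_Z`, every level pairing
vanishes. Writing the clamped `Z` as a limit of step functions built from its level sets, and then
letting the clamp go to infinity, gives `∫ W Z = 0`. Applying this to `Z = X₁` and `Z = X₂` yields
`⟨W, Y - X₂⟩ = ⟨W, Y - X₁⟩ ≤ 0`.
-/

noncomputable def levelStep (a δ : ℝ) (N : ℕ) (x : ℝ) : ℝ :=
  a + δ * ∑ j ∈ Finset.Icc 1 N, if a + j * δ ≤ x then (1:ℝ) else 0

lemma abs_levelStep_sub_clamp_le {a δ : ℝ} (hδ : 0 < δ) (N : ℕ) (x : ℝ) :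
    |levelStep a δ N x - max a (min x (a + N * δ))| ≤ δ := by
  set k := min N ⌊(x - a) / δ⌋₊
  have hle_iff : ∀ j : ℕ, 1 ≤ j → (a + j * δ ≤ x ↔ j ≤ ⌊(x - a) / δ⌋₊) := fun j hj => by
    rw [Nat.le_floor_iff' (by omega), le_div_iff₀ hδ]
    constructor <;> intro <;> linarith
  have hcount : levelStep a δ N x = a + k * δ := by
    have hfilter : (Finset.Icc 1 N).filter (fun j : ℕ => a + j * δ ≤ x) = Finset.Icc 1 k := by
      ext j
      simp only [Finset.mem_filter, Finset.mem_Icc, k, le_min_iff]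
      constructor
      · rintro ⟨⟨hj, hjN⟩, hjx⟩; exact ⟨hj, hjN, (hle_iff j hj).1 hjx⟩
      · rintro ⟨hj, hjN, hjx⟩; exact ⟨⟨hj, hjN⟩, (hle_iff j hj).2 hjx⟩
    rw [levelStep, Finset.sum_boole, hfilter, Nat.card_Icc, Nat.add_sub_cancel]
    ring
  have hk_nonneg : 0 ≤ (k : ℝ) * δ := by positivity
  have hkN : k ≤ N := min_le_left _ _
  have hkNδ : (k : ℝ) * δ ≤ N * δ := by gcongr
  have hk_le : 1 ≤ k → a + k * δ ≤ x := fun hk => (hle_iff k hk).2 (min_le_right _ _)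
  have hk_lt : k < N → x < a + k * δ + δ := fun hk => by
    have := Nat.lt_floor_add_one ((x - a) / δ)
    rw [← show k = ⌊(x - a) / δ⌋₊ by omega, div_lt_iff₀ hδ] at this
    linarith
  rw [hcount, abs_le]
  rcases Nat.eq_zero_or_pos k with hk0 | hk1 <;> rcases hkN.lt_or_eq with hkN' | hkN'
  all_goals first
    | have := hk_lt hkN'
    | have : (k : ℝ) * δ = N * δ := by rw [hkN']
  all_goals first
    | have := hk_le hk1
    | have : (k : ℝ) * δ = 0 := by simp [hk0]
  all_goals
    simp only [max_def, min_def]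
    split_ifs <;> constructor <;> linarith

lemma abs_max_min_le (a b z : ℝ) : |max a (min z b)| ≤ max |a| |b| := by
  rw [abs_le]; constructor <;> grind [abs_le, le_abs_self, neg_abs_le]

lemma abs_max_neg_min_le {n : ℝ} (hn : 0 ≤ n) (z : ℝ) : |max (-n) (min z n)| ≤ |z| := by
  rw [abs_le]; constructor <;> grind [abs_le, le_abs_self, neg_abs_le]

lemma monotone_sub_clamp {a b : ℝ} (hab : a ≤ b) : Monotone fun x : ℝ => x - max a (min x b) := by
  intro x y hxy
  grind

section Clamp

variable {α : Type*} [MeasurableSpace α] {μ : Measure α} {W Z : α → ℝ}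

lemma integrable_mul_ite_le (hW : Integrable W μ) (hZ : AEMeasurable Z μ) (l : ℝ) :
    Integrable (fun m => W m * if l ≤ Z m then (1:ℝ) else 0) μ := by
  refine hW.mul_bdd ?_ (c := 1) (Eventually.of_forall fun m => ?_)
  · exact ((measurable_const.ite measurableSet_Ici measurable_const).comp_aemeasurable
      hZ).aestronglyMeasurable
  · split_ifs <;> simp

lemma mul_levelStep (w a δ : ℝ) (N : ℕ) (x : ℝ) :
    w * levelStep a δ N x
      = a * w + δ * ∑ j ∈ Finset.Icc 1 N, w * (if a + j * δ ≤ x then (1:ℝ) else 0) := by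
  rw [levelStep, ← Finset.mul_sum]; ring

lemma integrable_mul_levelStep (hW : Integrable W μ) (hZ : AEMeasurable Z μ) (a δ : ℝ) (N : ℕ) :
    Integrable (fun m => W m * levelStep a δ N (Z m)) μ := by
  simp only [mul_levelStep]
  exact (hW.const_mul a).add
    ((integrable_finsetSum _ fun j _ => integrable_mul_ite_le hW hZ _).const_mul δ)

lemma integral_mul_levelStep (hW : Integrable W μ) (hZ : AEMeasurable Z μ) (a δ : ℝ) (N : ℕ) :
    ∫ m, W m * levelStep a δ N (Z m) ∂μ
      = a * ∫ m, W m ∂μ + δ * ∑ j ∈ Finset.Icc 1 N,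
          ∫ m, W m * (if a + j * δ ≤ Z m then (1:ℝ) else 0) ∂μ := by
  have hlev := fun j : ℕ => integrable_mul_ite_le hW hZ (a + j * δ)
  simp only [mul_levelStep]
  rw [integral_add (hW.const_mul a) ((integrable_finsetSum _ fun j _ => hlev j).const_mul δ),
    integral_const_mul, integral_const_mul, integral_finsetSum _ fun j _ => hlev j]

lemma abs_integral_mul_sub_integral_mul_le {g h : α → ℝ}
    (hW : Integrable W μ) (hg : Integrable (fun m => W m * g m) μ)
    (hh : Integrable (fun m => W m * h m) μ) {δ : ℝ} (hgh : ∀ m, |g m - h m| ≤ δ) :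
    |∫ m, W m * g m ∂μ - ∫ m, W m * h m ∂μ| ≤ δ * ∫ m, |W m| ∂μ := by
  rw [← integral_sub hg hh, ← integral_const_mul, ← Real.norm_eq_abs]
  refine norm_integral_le_of_norm_le (hW.abs.const_mul δ) (Eventually.of_forall fun m => ?_)
  rw [← mul_sub, Real.norm_eq_abs, abs_mul, mul_comm]
  exact mul_le_mul_of_nonneg_right (hgh m) (abs_nonneg _)

lemma memLp_clamp [IsFiniteMeasure μ] (hZ : AEStronglyMeasurable Z μ) (a b : ℝ) (p : ENNReal) :
    MemLp (fun m => max a (min (Z m) b)) p μ :=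
  MemLp.of_bound
    ((continuous_const.max (continuous_id.min continuous_const)).comp_aestronglyMeasurable hZ)
    _ (Eventually.of_forall fun m => abs_max_min_le a b (Z m))

lemma integral_mul_clamp_le_of_forall_level_le_add [IsFiniteMeasure μ] (hW : Integrable W μ)
    (hZ : AEMeasurable Z μ) {a b c : ℝ} (hab : a < b)
    (hlev : ∀ l ∈ Ioc a b, ∫ m, W m * (if l ≤ Z m then (1:ℝ) else 0) ∂μ ≤ c) (N : ℕ) :
    ∫ m, W m * max a (min (Z m) b) ∂μ
      ≤ a * ∫ m, W m ∂μ + (b - a) * c + (b - a) * (1 / (N + 1)) * ∫ m, |W m| ∂μ := by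
  set δ := (b - a) / (N + 1)
  have hδ : 0 < δ := div_pos (sub_pos.2 hab) (by positivity)
  have hb : b = a + (N + 1 : ℕ) * δ := by
    simp only [δ]; push_cast; field_simp; ring
  have hstep : ∫ m, W m * levelStep a δ (N + 1) (Z m) ∂μ ≤ a * ∫ m, W m ∂μ + (b - a) * c := by
    have hsum := Finset.sum_le_card_nsmul (Finset.Icc 1 (N + 1))
      (fun j : ℕ => ∫ m, W m * (if a + j * δ ≤ Z m then (1:ℝ) else 0) ∂μ) c fun j hj => by
      obtain ⟨hj₁, hjN⟩ := Finset.mem_Icc.1 hj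
      refine hlev _ ⟨?_, ?_⟩
      · have : (1 : ℝ) ≤ j := by exact_mod_cast hj₁
        nlinarith
      · rw [hb]; gcongr
    rw [Nat.card_Icc, Nat.add_sub_cancel, nsmul_eq_mul] at hsum
    rw [integral_mul_levelStep hW hZ, hb]
    have := mul_le_mul_of_nonneg_left hsum hδ.le
    push_cast at this ⊢
    linarith
  have hclose := abs_integral_mul_sub_integral_mul_le hW
    (hW.mul_of_top_left (memLp_clamp hZ.aestronglyMeasurable a b ⊤))
    (integrable_mul_levelStep hW hZ a δ (N + 1))
    (fun m => abs_sub_comm (levelStep a δ (N + 1) (Z m)) _ ▸ hb ▸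
      abs_levelStep_sub_clamp_le hδ (N + 1) (Z m))
  have hδ_eq : δ * ∫ m, |W m| ∂μ = (b - a) * (1 / (N + 1)) * ∫ m, |W m| ∂μ := by
    simp only [δ]; ring
  linarith [(abs_le.1 hclose).2]

lemma integral_mul_clamp_le_of_forall_level_le [IsFiniteMeasure μ] (hW : Integrable W μ)
    (hZ : AEMeasurable Z μ) {a b c : ℝ} (hab : a < b)
    (hlev : ∀ l ∈ Ioc a b, ∫ m, W m * (if l ≤ Z m then (1:ℝ) else 0) ∂μ ≤ c) :
    ∫ m, W m * max a (min (Z m) b) ∂μ ≤ a * ∫ m, W m ∂μ + (b - a) * c := by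
  have hlim := ((tendsto_one_div_add_atTop_nhds_zero_nat.const_mul (b - a)).mul_const
    (∫ m, |W m| ∂μ)).const_add (a * ∫ m, W m ∂μ + (b - a) * c)
  rw [mul_zero, zero_mul, add_zero] at hlim
  exact ge_of_tendsto' hlim (integral_mul_clamp_le_of_forall_level_le_add hW hZ hab hlev)

lemma tendsto_integral_mul_clamp (hW : AEStronglyMeasurable W μ) (hZ : AEStronglyMeasurable Z μ)
    (hWZ : Integrable (fun m => W m * Z m) μ) :
    Tendsto (fun n : ℕ => ∫ m, W m * max (-(n:ℝ)) (min (Z m) n) ∂μ) atTop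
      (𝓝 (∫ m, W m * Z m ∂μ)) := by
  refine tendsto_integral_of_dominated_convergence _ (fun n => hW.mul ?_) hWZ.norm
    (fun n => Eventually.of_forall fun m => ?_) (Eventually.of_forall fun m => ?_)
  · exact (continuous_const.max (continuous_id.min continuous_const)).comp_aestronglyMeasurable hZ
  · simp only [norm_mul, Real.norm_eq_abs]
    exact mul_le_mul_of_nonneg_left (abs_max_neg_min_le n.cast_nonneg _) (abs_nonneg _)
  · obtain ⟨N, hN⟩ := exists_nat_ge |Z m|
    refine tendsto_atTop_of_eventually_const (i₀ := N) fun n hn => ?_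
    have : |Z m| ≤ n := hN.trans (Nat.cast_le.2 hn)
    grind [abs_le]

end Clamp

def IsLevelCrossing (Z : ℝ → ℝ) (l s : ℝ) : Prop :=
  ∀ m ∈ Ioo (0:ℝ) 1, (m < s → Z m < l) ∧ (s < m → l ≤ Z m)

lemma MonotoneOn.exists_isLevelCrossing {Z : ℝ → ℝ} (hZ : MonotoneOn Z (Ioo (0:ℝ) 1)) (l : ℝ) :
    ∃ s ∈ Icc (0:ℝ) 1, IsLevelCrossing Z l s := by
  set A := insert 1 {m | m ∈ Ioo (0:ℝ) 1 ∧ l ≤ Z m}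
  have hA : A.Nonempty := insert_nonempty _ _
  have hA₀ : ∀ m ∈ A, 0 ≤ m := by
    rintro m (rfl | ⟨hm, -⟩)
    exacts [zero_le_one, hm.1.le]
  have hbdd : BddBelow A := ⟨0, hA₀⟩
  refine ⟨sInf A, ⟨le_csInf hA hA₀, csInf_le hbdd (mem_insert _ _)⟩,
    fun m hm => ⟨fun hms => ?_, fun hsm => ?_⟩⟩
  · by_contra h
    exact (csInf_le hbdd (mem_insert_of_mem _ ⟨hm, not_lt.1 h⟩)).not_gt hms
  · obtain ⟨a, ha, ham⟩ := exists_lt_of_csInf_lt hA hsm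
    rcases ha with rfl | ⟨ha, hla⟩
    · exact absurd hm.2 ham.not_gt
    · exact hla.trans (hZ ha hm ham.le)

namespace IsLevelCrossing

variable {Z : ℝ → ℝ} {l s : ℝ}

lemma mem_Icc (h : IsLevelCrossing Z l s) {y z : ℝ} (hy : y ∈ Ioo (0:ℝ) 1) (hz : z ∈ Ioo (0:ℝ) 1)
    (hyl : Z y < l) (hlz : l ≤ Z z) : s ∈ Icc y z :=
  ⟨le_of_not_gt fun hsy => ((h y hy).2 hsy).not_gt hyl,
    le_of_not_gt fun hzs => ((h z hz).1 hzs).not_ge hlz⟩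

lemma notMem_locallyConstantSet (h : IsLevelCrossing Z l s) : s ∉ locallyConstantSet Z := by
  rintro ⟨hs, ε, hε, hconst⟩
  rw [Real.ball_eq_Ioo] at hconst
  set r := min (ε / 2) (min s (1 - s) / 2)
  have hr : 0 < r := lt_min (half_pos hε) (half_pos (lt_min hs.1 (sub_pos.2 hs.2)))
  have hrε : r ≤ ε / 2 := min_le_left _ _
  have hrs : r ≤ min s (1 - s) / 2 := min_le_right _ _
  have hs₁ := min_le_left s (1 - s)
  have hs₂ := min_le_right s (1 - s)
  have hbelow := (h (s - r) ⟨by linarith, by linarith⟩).1 (by linarith)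
  have habove := (h (s + r) ⟨by linarith, by linarith⟩).2 (by linarith)
  have heq := hconst (s - r) ⟨by linarith, by linarith⟩ (s + r) ⟨by linarith, by linarith⟩
  linarith

lemma ite_ae_eq_indicator (h : IsLevelCrossing Z l s) :
    (fun m => if l ≤ Z m then (1:ℝ) else 0)
      =ᵐ[volume.restrict (Ioo (0:ℝ) 1)] (Ioi s).indicator 1 := by
  filter_upwards [ae_restrict_mem measurableSet_Ioo, (countable_singleton s).ae_notMem _]
    with m hm hms
  rcases lt_or_gt_of_ne hms with hlt | hgt
  · simp [(h m hm).1 hlt, hlt.not_gt]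
  · simp [(h m hm).2 hgt, hgt]

end IsLevelCrossing

/-- The paper's `Ξ_W`; the indicator makes it a primitive of an integrable function on `ℝ`. -/
noncomputable def Xi (W : ℝ → ℝ) (t : ℝ) : ℝ :=
  ∫ x in (0:ℝ)..t, (Ioo (0:ℝ) 1).indicator W x

section Xi

variable {W : ℝ → ℝ}

lemma Xi_zero : Xi W 0 = 0 := intervalIntegral.integral_same

lemma continuous_Xi (hW : IntegrableOn W (Ioo (0:ℝ) 1)) : Continuous (Xi W) :=
  intervalIntegral.continuous_primitive
    (fun _ _ => (hW.integrable_indicator measurableSet_Ioo).intervalIntegrable) 0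

lemma Xi_one : Xi W 1 = ∫ m in Ioo (0:ℝ) 1, W m := by
  rw [Xi, intervalIntegral.integral_of_le zero_le_one, integral_Ioc_eq_integral_Ioo,
    setIntegral_indicator measurableSet_Ioo, inter_self]

lemma integral_mul_indicator_Ioi (hW : IntegrableOn W (Ioo (0:ℝ) 1)) {r : ℝ}
    (hr : r ∈ Icc (0:ℝ) 1) :
    ∫ m in Ioo (0:ℝ) 1, W m * (Ioi r).indicator 1 m = Xi W 1 - Xi W r := by
  have hi := fun t =>
    (hW.integrable_indicator measurableSet_Ioo).intervalIntegrable (a := 0) (b := t)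
  rw [Xi, Xi, intervalIntegral.integral_interval_sub_left (hi 1) (hi r),
    intervalIntegral.integral_of_le hr.2, integral_Ioc_eq_integral_Ioo,
    setIntegral_indicator measurableSet_Ioo]
  have hmul : ∀ m, W m * (Ioi r).indicator 1 m = (Ioi r).indicator W m := fun m => by
    by_cases h : m ∈ Ioi r <;> simp [h]
  simp_rw [hmul]
  rw [setIntegral_indicator measurableSet_Ioi, Ioo_inter_Ioi, max_eq_right hr.1,
    inter_eq_left.2 (Ioo_subset_Ioo_left hr.1)]

end Xi

section NormalCone

variable {W X : ℝ → ℝ} (hW : W ∈ normalCone X) (hX : MonotoneOn X (Ioo (0:ℝ) 1))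
  (hXp : MemLp X 2 (volume.restrict (Ioo (0:ℝ) 1)))
include hW hX hXp

lemma integral_mul_nonpos_of_mem_normalCone {g : ℝ → ℝ} (hg : MonotoneOn g (Ioo (0:ℝ) 1))
    (hgp : MemLp g 2 (volume.restrict (Ioo (0:ℝ) 1))) :
    ∫ m in Ioo (0:ℝ) 1, W m * g m ≤ 0 := by
  simpa using hW.2 (X + g) (fun a ha b hb hab => add_le_add (hX ha hb hab) (hg ha hb hab))
    (hXp.add hgp)

lemma integral_eq_zero_of_mem_normalCone : ∫ m in Ioo (0:ℝ) 1, W m = 0 := by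
  have h₁ := integral_mul_nonpos_of_mem_normalCone hW hX hXp (g := fun _ => 1) monotoneOn_const
    (memLp_const 1)
  have h₂ := integral_mul_nonpos_of_mem_normalCone hW hX hXp (g := fun _ => -1) monotoneOn_const
    (memLp_const (-1))
  simp only [mul_one, mul_neg, integral_neg, neg_nonpos] at h₁ h₂
  exact le_antisymm h₁ h₂

lemma Xi_one_of_mem_normalCone : Xi W 1 = 0 := by
  rw [Xi_one, integral_eq_zero_of_mem_normalCone hW hX hXp]

lemma Xi_nonneg_of_mem_normalCone {r : ℝ} (hr : r ∈ Icc (0:ℝ) 1) : 0 ≤ Xi W r := by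
  have hmono : MonotoneOn ((Ioi r).indicator (1 : ℝ → ℝ)) (Ioo (0:ℝ) 1) :=
    fun a _ b _ hab => by
      by_cases ha : a ∈ Ioi r
      · simp [ha, show b ∈ Ioi r from lt_of_lt_of_le ha hab]
      · simp only [indicator_of_notMem ha]
        exact indicator_nonneg (fun _ _ => zero_le_one) b
  have hmem : MemLp ((Ioi r).indicator (1 : ℝ → ℝ)) 2 (volume.restrict (Ioo (0:ℝ) 1)) :=
    ((memLp_top_const (1:ℝ)).indicator measurableSet_Ioi).mono_exponent le_top
  have := integral_mul_nonpos_of_mem_normalCone hW hX hXp hmono hmem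
  rw [integral_mul_indicator_Ioi (hW.1.integrable one_le_two) hr,
    Xi_one_of_mem_normalCone hW hX hXp] at this
  linarith

lemma integral_mul_ite_eq_neg_Xi {Z : ℝ → ℝ} {l s : ℝ} (hs : s ∈ Icc (0:ℝ) 1)
    (h : IsLevelCrossing Z l s) :
    ∫ m in Ioo (0:ℝ) 1, W m * (if l ≤ Z m then (1:ℝ) else 0) = -Xi W s := by
  rw [integral_congr_ae (h.ite_ae_eq_indicator.mono fun m hm => congrArg (W m * ·) hm),
    integral_mul_indicator_Ioi (hW.1.integrable one_le_two) hs,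
    Xi_one_of_mem_normalCone hW hX hXp, zero_sub]

lemma exists_Xi_eq_zero {y z : ℝ} (hy : y ∈ Ioo (0:ℝ) 1) (hz : z ∈ Ioo (0:ℝ) 1) (hyz : y ≤ z)
    (hlt : X y < X z) : ∃ s ∈ Icc y z, Xi W s = 0 := by
  have hWi : Integrable W (volume.restrict (Ioo (0:ℝ) 1)) := hW.1.integrable one_le_two
  obtain ⟨s₀, hs₀, hmin⟩ :=
    isCompact_Icc.exists_isMinOn (nonempty_Icc.2 hyz) (continuous_Xi hWi).continuousOn
  refine ⟨s₀, hs₀, le_antisymm ?_ (Xi_nonneg_of_mem_normalCone hW hX hXp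
    (Icc_subset_Icc hy.1.le hz.2.le hs₀))⟩
  have hpair : 0 ≤ ∫ m in Ioo (0:ℝ) 1, W m * max (X y) (min (X m) (X z)) := by
    have := hW.2 _ ((monotone_sub_clamp hlt.le).comp_monotoneOn hX)
      (hXp.sub (memLp_clamp hXp.1 (X y) (X z) 2))
    simpa only [Function.comp_apply, sub_sub_cancel_left, mul_neg, integral_neg,
      neg_nonpos] using this
  have hlev : ∀ l ∈ Ioc (X y) (X z),
      ∫ m in Ioo (0:ℝ) 1, W m * (if l ≤ X m then (1:ℝ) else 0) ≤ -Xi W s₀ := by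
    intro l hl
    obtain ⟨s, hs, hcross⟩ := hX.exists_isLevelCrossing l
    rw [integral_mul_ite_eq_neg_Xi hW hX hXp hs hcross, neg_le_neg_iff]
    exact hmin (hcross.mem_Icc hy hz hl.1 hl.2)
  have hle := integral_mul_clamp_le_of_forall_level_le hWi hXp.1.aemeasurable hlt hlev
  rw [integral_eq_zero_of_mem_normalCone hW hX hXp, mul_zero, zero_add] at hle
  nlinarith

lemma Xi_eq_zero_of_notMem {t : ℝ} (ht : t ∈ Icc (0:ℝ) 1) (hnc : t ∉ locallyConstantSet X) :
    Xi W t = 0 := by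
  rcases ht.1.eq_or_lt with rfl | ht₀
  · exact Xi_zero
  rcases ht.2.eq_or_lt with rfl | ht₁
  · exact Xi_one_of_mem_normalCone hW hX hXp
  have hclosed : IsClosed {s | Xi W s = 0} :=
    isClosed_eq (continuous_Xi (hW.1.integrable one_le_two)) continuous_const
  refine hclosed.closure_subset (Metric.mem_closure_iff.2 fun ε hε => ?_)
  set r := min ε (min t (1 - t))
  have hr : 0 < r := lt_min hε (lt_min ht₀ (sub_pos.2 ht₁))
  have hball : Metric.ball t r ⊆ Ioo (0:ℝ) 1 := by
    rw [Real.ball_eq_Ioo]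
    exact Ioo_subset_Ioo (by linarith [min_le_right ε (min t (1 - t)), min_le_left t (1 - t)])
      (by linarith [min_le_right ε (min t (1 - t)), min_le_right t (1 - t)])
  obtain ⟨u, hu, v, hv, huv⟩ : ∃ u ∈ Metric.ball t r, ∃ v ∈ Metric.ball t r, X u ≠ X v := by
    by_contra! h
    exact hnc ⟨⟨ht₀, ht₁⟩, r, hr, h⟩
  wlog huv' : u < v generalizing u v with H
  · exact H v hv u hu huv.symm
      ((not_lt.1 huv').lt_of_ne fun h => huv (h ▸ rfl))
  obtain ⟨s, hs, hXi⟩ := exists_Xi_eq_zero hW hX hXp (hball hu) (hball hv) huv'.le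
    ((hX (hball hu) (hball hv) huv'.le).lt_of_ne huv)
  have hs_ball : s ∈ Metric.ball t r := by
    rw [Real.ball_eq_Ioo] at hu hv ⊢
    exact Icc_subset_Ioo hu.1 hv.2 hs
  exact ⟨s, hXi, (Metric.mem_ball'.1 hs_ball).trans_le (min_le_left ε _)⟩

lemma integral_mul_eq_zero_of_locallyConstantSet_subset {Z : ℝ → ℝ}
    (hZ : MonotoneOn Z (Ioo (0:ℝ) 1)) (hZp : MemLp Z 2 (volume.restrict (Ioo (0:ℝ) 1)))
    (hΩ : locallyConstantSet X ⊆ locallyConstantSet Z) :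
    ∫ m in Ioo (0:ℝ) 1, W m * Z m = 0 := by
  have hWi : Integrable W (volume.restrict (Ioo (0:ℝ) 1)) := hW.1.integrable one_le_two
  have hlev : ∀ l, ∫ m in Ioo (0:ℝ) 1, W m * (if l ≤ Z m then (1:ℝ) else 0) = 0 := fun l => by
    obtain ⟨s, hs, hcross⟩ := hZ.exists_isLevelCrossing l
    rw [integral_mul_ite_eq_neg_Xi hW hX hXp hs hcross, neg_eq_zero]
    exact Xi_eq_zero_of_notMem hW hX hXp hs fun h => hcross.notMem_locallyConstantSet (hΩ h)
  have hclamp : ∀ n : ℕ, 1 ≤ n →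
      ∫ m in Ioo (0:ℝ) 1, W m * max (-(n:ℝ)) (min (Z m) n) = 0 := fun n hn => by
    have hab : -(n:ℝ) < n := by
      have : (1:ℝ) ≤ n := by exact_mod_cast hn
      linarith
    have hle := integral_mul_clamp_le_of_forall_level_le hWi hZp.1.aemeasurable hab (c := 0)
      fun l _ => (hlev l).le
    have hge := integral_mul_clamp_le_of_forall_level_le hWi.neg hZp.1.aemeasurable hab (c := 0)
      fun l _ => by simp only [Pi.neg_apply, neg_mul, integral_neg, hlev l, neg_zero, le_refl]
    simp only [Pi.neg_apply, neg_mul, integral_neg, integral_eq_zero_of_mem_normalCone hW hX hXp,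
      neg_zero, mul_zero, add_zero, neg_nonpos] at hle hge
    exact le_antisymm hle hge
  refine tendsto_nhds_unique (tendsto_integral_mul_clamp hW.1.1 hZp.1 (hW.1.integrable_mul hZp)) ?_
  exact tendsto_const_nhds.congr' (eventually_atTop.2 ⟨1, fun n hn => (hclamp n hn).symm⟩)

end NormalCone

/-- Monotonicity of normal cones: if `Ω_{X₁} ⊆ Ω_{X₂}` then `N_{X₁} K ⊆ N_{X₂} K`. -/
theorem stmt_5 (X₁ X₂ : ℝ → ℝ)
    (h₁ : MonotoneOn X₁ (Ioo (0:ℝ) 1)) (h₂ : MonotoneOn X₂ (Ioo (0:ℝ) 1))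
    (hm₁ : MemLp X₁ 2 (volume.restrict (Ioo (0:ℝ) 1)))
    (hm₂ : MemLp X₂ 2 (volume.restrict (Ioo (0:ℝ) 1)))
    (hΩ : locallyConstantSet X₁ ⊆ locallyConstantSet X₂) :
    normalCone X₁ ⊆ normalCone X₂ := by
  intro W hW
  refine ⟨hW.1, fun Y hY hYp => ?_⟩
  have hX₁ := integral_mul_eq_zero_of_locallyConstantSet_subset hW h₁ hm₁ h₁ hm₁ subset_rfl
  have hX₂ := integral_mul_eq_zero_of_locallyConstantSet_subset hW h₁ hm₁ h₂ hm₂ hΩ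
  have hint : ∀ {V : ℝ → ℝ}, MemLp V 2 (volume.restrict (Ioo (0:ℝ) 1)) →
      Integrable (fun m => W m * V m) (volume.restrict (Ioo (0:ℝ) 1)) :=
    fun hV => hW.1.integrable_mul hV
  have hpair := hW.2 Y hY hYp
  simp only [mul_sub] at hpair ⊢
  rw [integral_sub (hint hYp) (hint hm₁)] at hpair
  rw [integral_sub (hint hYp) (hint hm₂)]
  linarith
end

section
/- For t ≥ 1 define X(t,m) = (m − 1/2)(t − 1/|2m−1|)² for |m − 1/2| ≥ 1/(2t) and X(t,m) = 0 for |m − 1/2| < 1/(2t), with velocity V(t,m) = ∂⁺_t X(t,m). Then the kinetic and potential energies balance exactly: ∫₀¹ V(t,m)² dm = ∫₀¹∫₀¹ |X(t,m) − X(t,ω)| dm dω = (t−1)³/(3t) for all t ≥ 1. -/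
/-!
After the collision, `X(t, m) = (y/2) max(t - 1/|y|, 0)²` with `y = 2m - 1`, so the right
derivative is `V = y max(t - 1/|y|, 0)` and `V² = 2 (2m - 1) X` pointwise. Since `X(t, ·)` is
monotone, `∫∫ |X(m) - X(ω)| = 2 ∫ (2m - 1) X(m) dm`, so both energies equal
`∫₀¹ max(t |2m - 1| - 1, 0)² dm = (t - 1)³ / (3t)`.
-/

open MeasureTheory Set Filter Topology

theorem hasDerivWithinAt_max_sub_sq (c t : ℝ) :
    HasDerivWithinAt (fun s => max (s - c) 0 ^ 2) (2 * max (t - c) 0) (Ici t) t := by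
  rcases le_or_gt c t with hct | htc
  · have hsq : HasDerivAt (fun s => (s - c) ^ 2) (2 * (t - c)) t := by
      simpa using ((hasDerivAt_id t).sub_const c).fun_pow 2
    rw [max_eq_left (sub_nonneg.2 hct)]
    refine hsq.hasDerivWithinAt.congr (fun s hs => ?_) (by rw [max_eq_left (sub_nonneg.2 hct)])
    rw [max_eq_left (sub_nonneg.2 (hct.trans hs))]
  · rw [max_eq_right (sub_nonpos.2 htc.le), mul_zero]
    refine (hasDerivWithinAt_const t _ 0).congr_of_eventuallyEq ?_ (by simp [htc.le])
    filter_upwards [nhdsWithin_le_nhds (Iio_mem_nhds htc)] with s hs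
    simp [(mem_Iio.1 hs).le]

theorem integral_max_mul_sub_one_sq {k a b : ℝ} (hk : 0 < k) (ha : a ≤ k⁻¹)
    (hb : k⁻¹ ≤ b) :
    ∫ y in a..b, max (k * y - 1) 0 ^ 2 = (k * b - 1) ^ 3 / (3 * k) := by
  have hint : ∀ u v : ℝ, IntervalIntegrable (fun y => max (k * y - 1) 0 ^ 2) volume u v :=
    fun u v => Continuous.intervalIntegrable (by fun_prop) u v
  have hkk : k * k⁻¹ = 1 := mul_inv_cancel₀ hk.ne'
  rw [← intervalIntegral.integral_add_adjacent_intervals (hint a k⁻¹) (hint k⁻¹ b)]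
  have hzero : ∫ y in a..k⁻¹, max (k * y - 1) 0 ^ 2 = 0 := by
    refine (intervalIntegral.integral_congr (g := fun _ => 0) fun y hy => ?_).trans (by simp)
    rw [uIcc_of_le ha] at hy
    simp [max_eq_right (by nlinarith [hy.2] : k * y - 1 ≤ 0)]
  have hpos : ∫ y in k⁻¹..b, max (k * y - 1) 0 ^ 2 = ∫ y in k⁻¹..b, (k * y - 1) ^ 2 := by
    refine intervalIntegral.integral_congr fun y hy => ?_
    rw [uIcc_of_le hb] at hy
    simp only [max_eq_left (by nlinarith [hy.1] : 0 ≤ k * y - 1)]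
  rw [hzero, hpos, intervalIntegral.integral_comp_mul_sub (fun x => x ^ 2) hk.ne', integral_pow,
    hkk, sub_self, smul_eq_mul]
  field_simp
  ring

theorem integral_max_mul_abs_sub_one_sq {t : ℝ} (ht : 1 ≤ t) :
    ∫ y in (-1)..1, max (t * |y| - 1) 0 ^ 2 = 2 * ((t - 1) ^ 3 / (3 * t)) := by
  set φ : ℝ → ℝ := fun y => max (t * |y| - 1) 0 ^ 2 with hφ
  have hint : ∀ u v : ℝ, IntervalIntegrable φ volume u v :=
    fun u v => Continuous.intervalIntegrable (by fun_prop) u v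
  have hhalf : ∫ y in (0:ℝ)..1, φ y = (t - 1) ^ 3 / (3 * t) := by
    rw [intervalIntegral.integral_congr (g := fun y => max (t * y - 1) 0 ^ 2) fun y hy => ?_]
    · simpa using integral_max_mul_sub_one_sq (by positivity) (by positivity)
        (inv_le_one_of_one_le₀ ht)
    · rw [uIcc_of_le zero_le_one] at hy
      simp only [hφ, abs_of_nonneg hy.1]
  have hneg : ∫ y in (-1:ℝ)..0, φ y = ∫ y in (0:ℝ)..1, φ y := by
    simpa [hφ] using (intervalIntegral.integral_comp_neg (a := 0) (b := 1) φ).symm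
  rw [← intervalIntegral.integral_add_adjacent_intervals (hint (-1) 0) (hint 0 1), hneg, hhalf]
  ring

theorem integral_abs_sub_of_monotone {f : ℝ → ℝ} (hf : Monotone f) {a b m : ℝ}
    (hm : m ∈ Icc a b) :
    ∫ ω in a..b, |f m - f ω| =
      (2 * m - a - b) * f m + (∫ ω in a..b, f ω) - 2 * ∫ ω in a..m, f ω := by
  have hint : ∀ u v, IntervalIntegrable f volume u v := fun u v => hf.intervalIntegrable
  have hint' : ∀ u v, IntervalIntegrable (fun ω => |f m - f ω|) volume u v :=
    fun u v => (intervalIntegrable_const.sub (hint u v)).abs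
  rw [← intervalIntegral.integral_add_adjacent_intervals (hint' a m) (hint' m b),
    ← intervalIntegral.integral_add_adjacent_intervals (hint a m) (hint m b)]
  have hleft : ∫ ω in a..m, |f m - f ω| = ∫ ω in a..m, (f m - f ω) := by
    refine intervalIntegral.integral_congr fun ω hω => abs_of_nonneg (sub_nonneg.2 (hf ?_))
    exact ((uIcc_of_le hm.1) ▸ hω).2
  have hright : ∫ ω in m..b, |f m - f ω| = ∫ ω in m..b, (f ω - f m) := by
    refine intervalIntegral.integral_congr fun ω hω => abs_sub_comm (f m) (f ω) ▸
      abs_of_nonneg (sub_nonneg.2 (hf ?_))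
    exact ((uIcc_of_le hm.2) ▸ hω).1
  rw [hleft, hright, intervalIntegral.integral_sub intervalIntegrable_const (hint a m),
    intervalIntegral.integral_sub (hint m b) intervalIntegrable_const]
  simp only [intervalIntegral.integral_const, smul_eq_mul]
  ring

theorem integral_integral_abs_sub_of_monotone {f : ℝ → ℝ} (hf : Monotone f)
    (hfc : Continuous f) {a b : ℝ} (hab : a ≤ b) :
    ∫ m in a..b, ∫ ω in a..b, |f m - f ω| = 2 * ∫ m in a..b, (2 * m - a - b) * f m := by
  set F : ℝ → ℝ := fun x => ∫ ω in a..x, f ω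
  have hF : ∀ x, HasDerivAt F (f x) x := fun x => (hfc.integral_hasStrictDerivAt a x).hasDerivAt
  have hFc : Continuous F := continuous_iff_continuousAt.2 fun x => (hF x).continuousAt
  -- the inner integral is `2 (2m - a - b) f m - G' m`, and `G a = G b`
  set G : ℝ → ℝ := fun x => (2 * x - a - b) * F x - F b * x
  set G' : ℝ → ℝ := fun x => 2 * F x + (2 * x - a - b) * f x - F b
  have hG : ∀ x, HasDerivAt G (G' x) x := fun x => by
    have := ((((hasDerivAt_id x).const_mul 2).sub_const a).sub_const b).mul (hF x)
    exact (this.sub ((hasDerivAt_id x).const_mul (F b))).congr_deriv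
      (by simp only [G', id]; ring)
  have hG'c : Continuous G' := by fun_prop
  have hgc : Continuous fun m => (2 * m - a - b) * f m := by fun_prop
  calc ∫ m in a..b, ∫ ω in a..b, |f m - f ω|
      = ∫ m in a..b, (2 * ((2 * m - a - b) * f m) - G' m) := by
        refine intervalIntegral.integral_congr fun m hm => ?_
        rw [integral_abs_sub_of_monotone hf (uIcc_of_le hab ▸ hm)]
        ring
    _ = 2 * (∫ m in a..b, (2 * m - a - b) * f m) - (G b - G a) := by
        rw [intervalIntegral.integral_sub ((hgc.intervalIntegrable a b).const_mul 2)
          (hG'c.intervalIntegrable a b), intervalIntegral.integral_const_mul,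
          intervalIntegral.integral_eq_sub_of_hasDerivAt (fun x _ => hG x)
          (hG'c.intervalIntegrable a b)]
    _ = 2 * ∫ m in a..b, (2 * m - a - b) * f m := by
        simp only [G, F, intervalIntegral.integral_same]
        ring

/-- The profile `X(t, ·)` in the variable `y = 2m - 1`: `X t m = releaseProfile t (2m - 1) / 2`
for `t > 0`. At `y = 0` the junk value `0⁻¹ = 0` is harmless thanks to the factor `y`. -/
noncomputable def releaseProfile (t y : ℝ) : ℝ := y * max (t - |y|⁻¹) 0 ^ 2

theorem ite_eq_releaseProfile {t : ℝ} (ht : 0 < t) (m : ℝ) :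
    (if 1 / (2 * t) ≤ |m - 1 / 2| then (m - 1 / 2) * (t - 1 / |2 * m - 1|) ^ 2 else 0) =
      releaseProfile t (2 * m - 1) / 2 := by
  have hm : m - 1 / 2 = (2 * m - 1) / 2 := by ring
  have hcond : (2 * t)⁻¹ ≤ |(2 * m - 1) / 2| ↔ t⁻¹ ≤ |2 * m - 1| := by
    rw [abs_div, abs_two, mul_inv, mul_comm, ← div_eq_mul_inv,
      div_le_div_iff_of_pos_right two_pos]
  rw [hm, releaseProfile, one_div]
  split_ifs with h <;> rw [hcond] at h
  · have hy : 0 < |2 * m - 1| := (inv_pos.2 ht).trans_le h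
    rw [max_eq_left (sub_nonneg.2 ((inv_le_comm₀ ht hy).1 h))]
    ring
  · rcases eq_or_ne (2 * m - 1) 0 with hy | hy
    · simp [hy]
    · rw [max_eq_right (sub_nonpos.2 ((lt_inv_comm₀ (abs_pos.2 hy) ht).1 (not_le.1 h)).le)]
      simp

namespace releaseProfile

theorem neg (t y : ℝ) : releaseProfile t (-y) = -releaseProfile t y := by
  simp [releaseProfile]

theorem monotone (t : ℝ) : Monotone (releaseProfile t) := by
  refine monotone_of_odd_of_monotoneOn_nonneg (neg t) fun a ha b hb hab => ?_
  rcases (mem_Ici.1 ha).eq_or_lt with rfl | ha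
  · simp only [releaseProfile, zero_mul]
    exact mul_nonneg hb (sq_nonneg _)
  · unfold releaseProfile
    rw [abs_of_pos ha, abs_of_pos (ha.trans_le hab)]
    gcongr

theorem continuous (t : ℝ) : Continuous (releaseProfile t) := by
  refine continuous_iff_continuousAt.2 fun y => ?_
  rcases eq_or_ne y 0 with rfl | hy
  · have hbound : ∀ z, ‖releaseProfile t z‖ ≤ |z| * max t 0 ^ 2 := fun z => by
      rw [Real.norm_eq_abs, releaseProfile, abs_mul, abs_sq]
      gcongr
      linarith [inv_nonneg.2 (abs_nonneg z)]
    have hlim : Tendsto (fun z => |z| * max t 0 ^ 2) (𝓝 0) (𝓝 0) := by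
      simpa using (by fun_prop : Continuous fun z : ℝ => |z| * max t 0 ^ 2).tendsto 0
    simpa [ContinuousAt, releaseProfile] using squeeze_zero_norm hbound hlim
  · unfold releaseProfile
    have := abs_ne_zero.2 hy
    fun_prop (disch := assumption)

theorem hasDerivWithinAt (t y : ℝ) :
    HasDerivWithinAt (fun s => releaseProfile s y) (2 * y * max (t - |y|⁻¹) 0) (Ici t) t :=
  ((hasDerivWithinAt_max_sub_sq |y|⁻¹ t).const_mul y).congr_deriv (by ring)

end releaseProfile

theorem mul_releaseProfile (t y : ℝ) : y * releaseProfile t y = max (t * |y| - 1) 0 ^ 2 := by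
  rcases eq_or_ne y 0 with rfl | hy
  · simp
  have : |y| * max (t - |y|⁻¹) 0 = max (t * |y| - 1) 0 := by
    rw [mul_max_of_nonneg _ _ (abs_nonneg y), mul_zero, mul_sub,
      mul_inv_cancel₀ (abs_ne_zero.2 hy), mul_comm]
  rw [← this, mul_pow, sq_abs, releaseProfile]
  ring

theorem integral_mul_releaseProfile {t : ℝ} (ht : 1 ≤ t) :
    ∫ m in (0:ℝ)..1, (2 * m - 1) * releaseProfile t (2 * m - 1) = (t - 1) ^ 3 / (3 * t) := by
  simp only [mul_releaseProfile]
  rw [intervalIntegral.integral_comp_mul_sub (fun y => max (t * |y| - 1) 0 ^ 2) two_ne_zero]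
  norm_num [integral_max_mul_abs_sub_one_sq ht]
  ring

/-- Post-collision entropic solution of the repulsive Euler–Poisson system: for `t ≥ 1`, the
kinetic and potential energies balance exactly,
`∫₀¹ V(t,m)² dm = ∫₀¹∫₀¹ |X(t,m) - X(t,ω)| dm dω = (t-1)³/(3t)`. -/
theorem stmt_15 (X V : ℝ → ℝ → ℝ)
    (hX : ∀ t m, X t m =
      if 1 / (2 * t) ≤ |m - 1 / 2| then (m - 1 / 2) * (t - 1 / |2 * m - 1|) ^ 2 else 0)
    (hV : ∀ t m, V t m = derivWithin (fun s => X s m) (Ici t) t) :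
    ∀ t, 1 ≤ t →
      (∫ m in Ioo (0:ℝ) 1, (V t m) ^ 2) = (t - 1) ^ 3 / (3 * t) ∧
      (∫ m in Ioo (0:ℝ) 1, ∫ ω in Ioo (0:ℝ) 1, |X t m - X t ω|) = (t - 1) ^ 3 / (3 * t) := by
  intro t ht
  have hX_eq : ∀ s, 0 < s → ∀ m, X s m = releaseProfile s (2 * m - 1) / 2 := fun s hs m => by
    rw [hX, ite_eq_releaseProfile hs]
  have hV_eq : ∀ m, V t m = (2 * m - 1) * max (t - |2 * m - 1|⁻¹) 0 := fun m => by
    have hd := ((releaseProfile.hasDerivWithinAt t (2 * m - 1)).div_const 2).congr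
      (fun s hs => hX_eq s (by linarith [mem_Ici.1 hs]) m) (hX_eq t (by linarith) m)
    rw [hV, hd.derivWithin (uniqueDiffWithinAt_Ici t)]
    ring
  have hIoo : ∀ f : ℝ → ℝ, ∫ m in Ioo (0:ℝ) 1, f m = ∫ m in (0:ℝ)..1, f m := by
    intro f
    rw [intervalIntegral.integral_of_le zero_le_one, integral_Ioc_eq_integral_Ioo]
  simp only [hIoo]
  constructor
  · rw [← integral_mul_releaseProfile ht]
    refine intervalIntegral.integral_congr fun m _ => ?_
    rw [hV_eq, releaseProfile]
    ring
  · have hmono : Monotone fun m : ℝ => releaseProfile t (2 * m - 1) / 2 :=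
      ((releaseProfile.monotone t).comp fun a b hab => by linarith).div_const two_pos.le
    have hcont : Continuous fun m : ℝ => releaseProfile t (2 * m - 1) / 2 :=
      ((releaseProfile.continuous t).comp (by fun_prop)).div_const 2
    simp only [hX_eq t (by linarith)]
    rw [integral_integral_abs_sub_of_monotone hmono hcont zero_le_one,
      ← integral_mul_releaseProfile ht, ← intervalIntegral.integral_const_mul]
    refine intervalIntegral.integral_congr fun m _ => ?_
    ring
end

section
/- Let X ∈ L²(0,1) be nondecreasing. Then for a.e. m ∈ (0,1): ∫₀¹ sgn(X(m) − X(ω)) dω = 2m − 1 if m is not in the locally-constant set Ω_X, and ∫₀¹ sgn(X(m) − X(ω)) dω = m_l + m_r − 1 if m belongs to a maximal interval (m_l, m_r) ⊆ Ω_X where X is constant. In particular, the function m ↦ ∫₀¹ sgn(X(m) − X(ω)) dω equals Proj_{H_X}(2m − 1) a.e. -/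
/-!
For fixed `m`, `sgn (X m - X ω)` is `1` on `{X < X m}`, `-1` on `{X > X m}` and `0` elsewhere, so
its integral is `|{X < X m}| - |{X > X m}|`. By monotonicity these two sets are, up to endpoints,
`(0, a)` and `(b, 1)`, where `[a, b]` is the level set of `X m`. Off `Ω_X` this level set is `{m}`
except at the countably many endpoints of flat stretches of `X` (each flat stretch contains a
rational), giving `m - (1 - m)`; on a maximal interval `(a, b)` of `Ω_X` it lies between `(a, b)`
and `[a, b]`, because `X` is constant on the connected open set `(a, b)` and an equality
`X ω = X m` with `ω` outside `[a, b]` would put `a` or `b` inside `Ω_X`.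
-/

open MeasureTheory Set

/-- `(a,b)` is a maximal open interval of the locally-constant set of `X`. -/
def IsMaxInterval (X : ℝ → ℝ) (a b : ℝ) : Prop :=
  a < b ∧ Ioo a b ⊆ locallyConstantSet X ∧
    a ∉ locallyConstantSet X ∧ b ∉ locallyConstantSet X

open Topology

theorem IsPreconnected.apply_eq_of_eventually_eq {α β : Type*} [TopologicalSpace α] {s : Set α}
    (hs : IsPreconnected s) {f : α → β} (hf : ∀ x ∈ s, ∀ᶠ y in 𝓝 x, f y = f x) {x y : α}
    (hx : x ∈ s) (hy : y ∈ s) : f x = f y := by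
  have : PreconnectedSpace s := isPreconnected_iff_preconnectedSpace.mp hs
  have hloc : IsLocallyConstant (fun z : s => f z) := (IsLocallyConstant.iff_eventually_eq _).2
    fun z => continuous_subtype_val.continuousAt.eventually (hf z z.2)
  exact hloc.apply_eq_of_preconnectedSpace ⟨x, hx⟩ ⟨y, hy⟩

theorem IsOpen.exists_Ioo_subset_of_isBounded {U : Set ℝ} (hU : IsOpen U)
    (hbdd : Bornology.IsBounded U) {m : ℝ} (hm : m ∈ U) :
    ∃ a b, m ∈ Ioo a b ∧ Ioo a b ⊆ U ∧ a ∉ U ∧ b ∉ U := by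
  obtain ⟨l, hl⟩ := hbdd.bddBelow
  obtain ⟨r, hr⟩ := hbdd.bddAbove
  have hlU : l - 1 ∉ U := fun h => by linarith [hl h]
  have hrU : r + 1 ∉ U := fun h => by linarith [hr h]
  have hlm : l - 1 ≤ m := by linarith [hl hm]
  have hmr : m ≤ r + 1 := by linarith [hr hm]
  have hA : IsClosed (Iic m \ U) := isClosed_Iic.sdiff hU
  have hB : IsClosed (Ici m \ U) := isClosed_Ici.sdiff hU
  have hAne : (Iic m \ U).Nonempty := ⟨l - 1, hlm, hlU⟩
  have hBne : (Ici m \ U).Nonempty := ⟨r + 1, hmr, hrU⟩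
  have hAbdd : BddAbove (Iic m \ U) := ⟨m, fun x hx => hx.1⟩
  have hBbdd : BddBelow (Ici m \ U) := ⟨m, fun x hx => hx.1⟩
  obtain ⟨ham, haU⟩ := hA.csSup_mem hAne hAbdd
  obtain ⟨hmb, hbU⟩ := hB.csInf_mem hBne hBbdd
  refine ⟨_, _, ⟨lt_of_le_of_ne ham (ne_of_mem_of_not_mem hm haU).symm,
    lt_of_le_of_ne hmb (ne_of_mem_of_not_mem hm hbU)⟩, fun x hx => ?_, haU, hbU⟩
  by_contra hxU
  rcases le_total x m with hxm | hmx
  · exact (le_csSup hAbdd ⟨hxm, hxU⟩).not_gt hx.1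
  · exact (csInf_le hBbdd ⟨hmx, hxU⟩).not_gt hx.2

theorem integral_sign_sub_eq_measureReal {α : Type*} [MeasurableSpace α] (μ : Measure α)
    [IsFiniteMeasure μ] {f : α → ℝ} (hf : Measurable f) (c : ℝ) :
    ∫ ω, Real.sign (c - f ω) ∂μ = μ.real {ω | f ω < c} - μ.real {ω | c < f ω} := by
  have hlt : MeasurableSet {ω | f ω < c} := measurableSet_lt hf measurable_const
  have hgt : MeasurableSet {ω | c < f ω} := measurableSet_lt measurable_const hf
  have hsign : (fun ω => Real.sign (c - f ω)) =
      fun ω => {ω | f ω < c}.indicator 1 ω - {ω | c < f ω}.indicator (1 : α → ℝ) ω := by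
    ext ω
    rcases lt_trichotomy (f ω) c with h | h | h
    · simp [h, h.not_gt, Real.sign_of_pos (sub_pos.2 h)]
    · simp [h]
    · simp [h, h.not_gt, Real.sign_of_neg (sub_neg.2 h)]
  rw [hsign, integral_sub ((integrable_const 1).indicator hlt) ((integrable_const 1).indicator hgt),
    integral_indicator_one hlt, integral_indicator_one hgt]

theorem Real.volume_real_eq_of_Ioo_subset_of_subset_Icc {s : Set ℝ} {a b : ℝ} (hab : a ≤ b)
    (h₁ : Ioo a b ⊆ s) (h₂ : s ⊆ Icc a b) : volume.real s = b - a := by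
  refine le_antisymm ?_ ?_
  · calc volume.real s ≤ volume.real (Icc a b) := measureReal_mono h₂ measure_Icc_lt_top.ne
      _ = b - a := by simp [hab]
  · calc b - a = volume.real (Ioo a b) := by simp [hab]
      _ ≤ volume.real s := measureReal_mono h₁ ((measure_mono h₂).trans_lt measure_Icc_lt_top).ne

section LocallyConstantSet

variable {X : ℝ → ℝ}

theorem mem_locallyConstantSet_iff {m : ℝ} :
    m ∈ locallyConstantSet X ↔ m ∈ Ioo 0 1 ∧ ∀ᶠ y in 𝓝 m, X y = X m := by
  refine and_congr_right fun _ => ⟨fun ⟨ε, hε, h⟩ => ?_, fun h => ?_⟩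
  · exact Filter.mem_of_superset (Metric.ball_mem_nhds m hε)
      fun y hy => h y hy m (Metric.mem_ball_self hε)
  · obtain ⟨ε, hε, h⟩ := Metric.eventually_nhds_iff_ball.1 h
    exact ⟨ε, hε, fun y hy z hz => (h y hy).trans (h z hz).symm⟩

theorem isOpen_locallyConstantSet : IsOpen (locallyConstantSet X) := by
  refine isOpen_iff_mem_nhds.2 fun m hm => ?_
  obtain ⟨hm01, hXm⟩ := mem_locallyConstantSet_iff.1 hm
  filter_upwards [isOpen_Ioo.mem_nhds hm01, hXm.eventually_nhds, hXm] with y hy hy' hym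
  exact mem_locallyConstantSet_iff.2 ⟨hy, hy'.mono fun z hz => hz.trans hym.symm⟩

theorem exists_isMaxInterval {m : ℝ} (hm : m ∈ locallyConstantSet X) :
    ∃ a b, IsMaxInterval X a b ∧ m ∈ Ioo a b := by
  have hbdd : Bornology.IsBounded (locallyConstantSet X) :=
    Metric.isBounded_Ioo (0 : ℝ) 1 |>.subset fun _ h => h.1
  obtain ⟨a, b, hmab, hsub, ha, hb⟩ :=
    isOpen_locallyConstantSet.exists_Ioo_subset_of_isBounded hbdd hm
  exact ⟨a, b, ⟨hmab.1.trans hmab.2, hsub, ha, hb⟩, hmab⟩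

theorem Ioo_subset_locallyConstantSet (hX : MonotoneOn X (Ioo 0 1)) {x y : ℝ}
    (hx : x ∈ Ioo 0 1) (hy : y ∈ Ioo 0 1) (hxy : X x = X y) : Ioo x y ⊆ locallyConstantSet X := by
  have hIcc : Icc x y ⊆ Ioo 0 1 := Icc_subset_Ioo hx.1 hy.2
  have hconst : ∀ u ∈ Icc x y, X u = X x := fun u hu =>
    le_antisymm (hxy ▸ hX (hIcc hu) hy hu.2) (hX hx (hIcc hu) hu.1)
  intro z hz
  refine mem_locallyConstantSet_iff.2 ⟨hIcc (Ioo_subset_Icc_self hz), ?_⟩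
  filter_upwards [isOpen_Ioo.mem_nhds hz] with u hu
  rw [hconst u (Ioo_subset_Icc_self hu), hconst z (Ioo_subset_Icc_self hz)]

namespace IsMaxInterval

variable {a b : ℝ} (h : IsMaxInterval X a b)
include h

theorem apply_eq {x y : ℝ} (hx : x ∈ Ioo a b) (hy : y ∈ Ioo a b) : X x = X y :=
  isPreconnected_Ioo.apply_eq_of_eventually_eq
    (fun _ hz => (mem_locallyConstantSet_iff.1 (h.2.1 hz)).2) hx hy

theorem Ioo_subset : Ioo a b ⊆ Ioo 0 1 := fun _ hx => (h.2.1 hx).1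

end IsMaxInterval

theorem setIntegral_sign_sub_of_levelSet_sandwich (hX : MonotoneOn X (Ioo 0 1))
    (hXmeas : Measurable X) {a b m : ℝ} (ha : 0 ≤ a) (hb : b ≤ 1) (ham : a ≤ m) (hmb : m ≤ b)
    (hm : m ∈ Ioo 0 1) (hconst : ∀ ω ∈ Ioo a b, X ω = X m)
    (hlevel : ∀ ω ∈ Ioo 0 1, X ω = X m → ω ∈ Icc a b) :
    ∫ ω in Ioo (0:ℝ) 1, Real.sign (X m - X ω) = a + b - 1 := by
  have hbelow : volume.real ({ω | X ω < X m} ∩ Ioo 0 1) = a - 0 := by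
    refine Real.volume_real_eq_of_Ioo_subset_of_subset_Icc ha (fun ω hω => ?_) fun ω hω => ?_
    · have hω01 : ω ∈ Ioo 0 1 := ⟨hω.1, hω.2.trans_le (ham.trans hm.2.le)⟩
      refine ⟨(hX hω01 hm (hω.2.le.trans ham)).lt_of_ne fun h => ?_, hω01⟩
      exact (hlevel ω hω01 h).1.not_gt hω.2
    · refine ⟨hω.2.1.le, not_lt.1 fun haω => (show X ω < X m from hω.1).ne ?_⟩
      rcases lt_or_ge ω b with hωb | hbω
      · exact hconst ω ⟨haω, hωb⟩
      · exact absurd (hX hm hω.2 (hmb.trans hbω)) hω.1.not_ge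
  have habove : volume.real ({ω | X m < X ω} ∩ Ioo 0 1) = 1 - b := by
    refine Real.volume_real_eq_of_Ioo_subset_of_subset_Icc hb (fun ω hω => ?_) fun ω hω => ?_
    · have hω01 : ω ∈ Ioo 0 1 := ⟨(hm.1.trans_le hmb).trans hω.1, hω.2⟩
      refine ⟨(hX hm hω01 (hmb.trans hω.1.le)).lt_of_ne fun h => ?_, hω01⟩
      exact (hlevel ω hω01 h.symm).2.not_gt hω.1
    · refine ⟨not_lt.1 fun hωb => (show X m < X ω from hω.1).ne' ?_, hω.2.2.le⟩
      rcases lt_or_ge a ω with haω | hωa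
      · exact hconst ω ⟨haω, hωb⟩
      · exact absurd (hX hω.2 hm (hωa.trans ham)) hω.1.not_ge
  rw [integral_sign_sub_eq_measureReal _ hXmeas,
    measureReal_restrict_apply (measurableSet_lt hXmeas measurable_const),
    measureReal_restrict_apply (measurableSet_lt measurable_const hXmeas), hbelow, habove]
  ring

def flatEndpoints (X : ℝ → ℝ) : Set ℝ :=
  {m | m ∈ Ioo 0 1 \ locallyConstantSet X ∧ ∃ ω ∈ Ioo 0 1, ω ≠ m ∧ X ω = X m}

theorem subsingleton_flatEndpoints_of_gt (hX : MonotoneOn X (Ioo 0 1)) {q : ℝ}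
    (hq : q ∈ Ioo 0 1) : {m ∈ flatEndpoints X | q < m ∧ X m = X q}.Subsingleton := by
  have hnot : ∀ m ∈ {m ∈ flatEndpoints X | q < m ∧ X m = X q},
      ∀ m' ∈ {m ∈ flatEndpoints X | q < m ∧ X m = X q}, ¬ m < m' := fun m hm m' hm' hlt =>
    hm.1.1.2 (Ioo_subset_locallyConstantSet hX hq hm'.1.1.1 hm'.2.2.symm ⟨hm.2.1, hlt⟩)
  exact fun m hm m' hm' => le_antisymm (not_lt.1 (hnot m' hm' m hm)) (not_lt.1 (hnot m hm m' hm'))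

theorem subsingleton_flatEndpoints_of_lt (hX : MonotoneOn X (Ioo 0 1)) {q : ℝ}
    (hq : q ∈ Ioo 0 1) : {m ∈ flatEndpoints X | m < q ∧ X m = X q}.Subsingleton := by
  have hnot : ∀ m ∈ {m ∈ flatEndpoints X | m < q ∧ X m = X q},
      ∀ m' ∈ {m ∈ flatEndpoints X | m < q ∧ X m = X q}, ¬ m < m' := fun m hm m' hm' hlt =>
    hm'.1.1.2 (Ioo_subset_locallyConstantSet hX hm.1.1.1 hq hm.2.2 ⟨hlt, hm'.2.1⟩)
  exact fun m hm m' hm' => le_antisymm (not_lt.1 (hnot m' hm' m hm)) (not_lt.1 (hnot m hm m' hm'))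

theorem countable_flatEndpoints (hX : MonotoneOn X (Ioo 0 1)) : (flatEndpoints X).Countable := by
  have hcover : flatEndpoints X ⊆ ⋃ q : ℚ, ⋃ (_ : (q : ℝ) ∈ Ioo 0 1),
      {m ∈ flatEndpoints X | (q : ℝ) < m ∧ X m = X q} ∪
        {m ∈ flatEndpoints X | m < q ∧ X m = X q} := by
    intro m hm
    obtain ⟨⟨hm01, -⟩, ω, hω01, hωm, hXω⟩ := id hm
    rcases hωm.lt_or_gt with hlt | hgt
    · obtain ⟨q, hωq, hqm⟩ := exists_rat_btwn hlt
      have hq01 : (q : ℝ) ∈ Ioo 0 1 := ⟨hω01.1.trans hωq, hqm.trans hm01.2⟩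
      have hXq : X m = X q :=
        le_antisymm (hXω.symm.trans_le (hX hω01 hq01 hωq.le)) (hX hq01 hm01 hqm.le)
      exact mem_iUnion₂.2 ⟨q, hq01, Or.inl ⟨hm, hqm, hXq⟩⟩
    · obtain ⟨q, hmq, hqω⟩ := exists_rat_btwn hgt
      have hq01 : (q : ℝ) ∈ Ioo 0 1 := ⟨hm01.1.trans hmq, hqω.trans hω01.2⟩
      have hXq : X m = X q :=
        le_antisymm (hX hm01 hq01 hmq.le) ((hX hq01 hω01 hqω.le).trans_eq hXω)
      exact mem_iUnion₂.2 ⟨q, hq01, Or.inr ⟨hm, hmq, hXq⟩⟩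
  exact (countable_iUnion fun q => countable_iUnion fun hq =>
    (subsingleton_flatEndpoints_of_gt hX hq).countable.union
      (subsingleton_flatEndpoints_of_lt hX hq).countable).mono hcover

theorem setIntegral_sign_sub_of_notMem (hX : MonotoneOn X (Ioo 0 1)) (hXmeas : Measurable X)
    {m : ℝ} (hm : m ∈ Ioo 0 1) (hΩ : m ∉ locallyConstantSet X) (hflat : m ∉ flatEndpoints X) :
    ∫ ω in Ioo (0:ℝ) 1, Real.sign (X m - X ω) = 2 * m - 1 := by
  rw [setIntegral_sign_sub_of_levelSet_sandwich hX hXmeas hm.1.le hm.2.le le_rfl le_rfl hm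
    (fun ω hω => (lt_irrefl m (hω.1.trans hω.2)).elim) fun ω hω hXω => ?_]
  · ring
  · rw [Icc_self]
    exact not_not.1 fun hne => hflat ⟨⟨hm, hΩ⟩, ω, hω, hne, hXω⟩

theorem IsMaxInterval.setIntegral_sign_sub (hX : MonotoneOn X (Ioo 0 1))
    (hXmeas : Measurable X) {a b m : ℝ} (h : IsMaxInterval X a b) (hm : m ∈ Ioo a b) :
    ∫ ω in Ioo (0:ℝ) 1, Real.sign (X m - X ω) = a + b - 1 := by
  obtain ⟨ha, hb⟩ := (Ioo_subset_Ioo_iff h.1).1 h.Ioo_subset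
  have hm01 : m ∈ Ioo 0 1 := h.Ioo_subset hm
  refine setIntegral_sign_sub_of_levelSet_sandwich hX hXmeas ha hb hm.1.le hm.2.le hm01
    (fun ω hω => h.apply_eq hω hm) fun ω hω hXω =>
      ⟨not_lt.1 fun hωa => h.2.2.1 ?_, not_lt.1 fun hbω => h.2.2.2 ?_⟩
  · exact Ioo_subset_locallyConstantSet hX hω hm01 hXω ⟨hωa, hm.1⟩
  · exact Ioo_subset_locallyConstantSet hX hm01 hω hXω.symm ⟨hm.2, hbω⟩

end LocallyConstantSet

theorem stmt_17_general (X P : ℝ → ℝ)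
    (hX : MonotoneOn X (Ioo (0:ℝ) 1))
    (hXmeas : Measurable X)
    (hP1 : ∀ m ∈ Ioo (0:ℝ) 1 \ locallyConstantSet X, P m = 2 * m - 1)
    (hP2 : ∀ a b, IsMaxInterval X a b → ∀ m ∈ Ioo a b, P m = a + b - 1) :
    ∀ᵐ m ∂(volume.restrict (Ioo (0:ℝ) 1)),
      (m ∉ locallyConstantSet X →
        (∫ ω in Ioo (0:ℝ) 1, Real.sign (X m - X ω)) = 2 * m - 1) ∧
      (∀ a b, IsMaxInterval X a b → m ∈ Ioo a b →
        (∫ ω in Ioo (0:ℝ) 1, Real.sign (X m - X ω)) = a + b - 1) ∧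
      (∫ ω in Ioo (0:ℝ) 1, Real.sign (X m - X ω)) = P m := by
  have hgood : ∀ᵐ m ∂(volume.restrict (Ioo (0:ℝ) 1)), m ∈ Ioo (0:ℝ) 1 ∧ m ∉ flatEndpoints X :=
    (ae_restrict_mem measurableSet_Ioo).and
      (ae_restrict_of_ae ((countable_flatEndpoints hX).ae_notMem volume))
  filter_upwards [hgood] with m ⟨hm, hflat⟩
  have hoff : m ∉ locallyConstantSet X →
      ∫ ω in Ioo (0:ℝ) 1, Real.sign (X m - X ω) = 2 * m - 1 :=
    fun hΩ => setIntegral_sign_sub_of_notMem hX hXmeas hm hΩ hflat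
  have hon : ∀ a b, IsMaxInterval X a b → m ∈ Ioo a b →
      ∫ ω in Ioo (0:ℝ) 1, Real.sign (X m - X ω) = a + b - 1 :=
    fun _ _ hab hmab => hab.setIntegral_sign_sub hX hXmeas hmab
  refine ⟨hoff, hon, ?_⟩
  by_cases hΩ : m ∈ locallyConstantSet X
  · obtain ⟨a, b, hab, hmab⟩ := exists_isMaxInterval hΩ
    rw [hon a b hab hmab, hP2 a b hab m hmab]
  · rw [hoff hΩ, hP1 m ⟨hm, hΩ⟩]

/-- For `X ∈ L²(0,1)` nondecreasing, a.e. `m`: `∫₀¹ sgn(X(m) - X(ω)) dω = 2m - 1` off the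
locally-constant set `Ω_X`, and `= a + b - 1` on each maximal interval `(a,b) ⊆ Ω_X`; in
particular this function coincides a.e. with `Proj_{H_X}(2m - 1)` (here represented by `P`). -/
theorem stmt_17 (X P : ℝ → ℝ)
    (hX : MonotoneOn X (Ioo (0:ℝ) 1))
    (hXmeas : Measurable X)
    (hXm : MemLp X 2 (volume.restrict (Ioo (0:ℝ) 1)))
    (hP1 : ∀ m ∈ Ioo (0:ℝ) 1 \ locallyConstantSet X, P m = 2 * m - 1)
    (hP2 : ∀ a b, IsMaxInterval X a b → ∀ m ∈ Ioo a b, P m = a + b - 1) :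
    ∀ᵐ m ∂(volume.restrict (Ioo (0:ℝ) 1)),
      (m ∉ locallyConstantSet X →
        (∫ ω in Ioo (0:ℝ) 1, Real.sign (X m - X ω)) = 2 * m - 1) ∧
      (∀ a b, IsMaxInterval X a b → m ∈ Ioo a b →
        (∫ ω in Ioo (0:ℝ) 1, Real.sign (X m - X ω)) = a + b - 1) ∧
      (∫ ω in Ioo (0:ℝ) 1, Real.sign (X m - X ω)) = P m :=
  stmt_17_general X P hX hXmeas hP1 hP2
end
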